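/- arXiv:1803.02328 — 5 statements merged into one kernel-verified Lean document; each statement's English description precedes it below -/
import Mathlib

section
/- Let M be an n×n real matrix and S a nonempty proper subset of {1,...,n}. For any complex number λ₀ not an eigenvalue of M_{S̄S̄}, λ₀ is an eigenvalue of M if and only if det(R_S(M)(λ₀) − λ₀ I) = 0, where R_S(M)(λ) = M_{SS} − M_{SS̄}(M_{S̄S̄} − λI)⁻¹ M_{S̄S} is the isospectral reduction of M over S. -/
open Matrix

/-- Submatrix of `M` with rows indexed by `R` and columns by `C`. -/
def subm {n : ℕ} {α : Type*} (M : Matrix (Fin n) (Fin n) α) (R C : Finset (Fin n)) :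
    Matrix R C α := fun i j => M i.1 j.1

/-- Spectral radius of a complex matrix: the sup of the moduli of its eigenvalues. -/
noncomputable def specRadC {m : Type*} [Fintype m] [DecidableEq m] (A : Matrix m m ℂ) : ℝ :=
  sSup ((fun z : ℂ => ‖z‖) '' spectrum ℂ A)

/-- Spectral radius of a real matrix, via complexification. -/
noncomputable def specRad {m : Type*} [Fintype m] [DecidableEq m] (A : Matrix m m ℝ) : ℝ :=
  specRadC (A.map Complex.ofReal)

/-- A nonnegative matrix is irreducible iff its directed graph (edge `i → j` iff
`0 < A i j`) is strongly connected. -/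
def Irred {m : Type*} (A : Matrix m m ℝ) : Prop :=
  ∀ i j, Relation.TransGen (fun a b => 0 < A a b) i j

/-- The isospectral reduction `R_S(M)(λ) = M_SS − M_SS̄ (M_S̄S̄ − λI)⁻¹ M_S̄S`,
evaluated at `λ = l`. -/
noncomputable def red {n : ℕ} {α : Type*} [Field α] (M : Matrix (Fin n) (Fin n) α)
    (S : Finset (Fin n)) (l : α) : Matrix S S α :=
  subm M S S - subm M S Sᶜ * (subm M Sᶜ Sᶜ - l • 1)⁻¹ * subm M Sᶜ S


lemma mem_spectrum_iff_det' {m : Type*} [Fintype m] [DecidableEq m]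
    (A : Matrix m m ℂ) (l : ℂ) :
    l ∈ spectrum ℂ A ↔ (A - l • (1 : Matrix m m ℂ)).det = 0 := by
  rw [spectrum.mem_iff, Algebra.algebraMap_eq_smul_one,
    show l • (1 : Matrix m m ℂ) - A = -(A - l • 1) from (neg_sub _ _).symm,
    Matrix.isUnit_iff_isUnit_det, Matrix.det_neg, isUnit_iff_ne_zero, not_ne_iff,
    mul_eq_zero]
  simp [pow_ne_zero]

noncomputable def eS {n : ℕ} (S : Finset (Fin n)) : (S ⊕ (Sᶜ : Finset (Fin n))) ≃ Fin n :=
  (Equiv.sumCongr (Equiv.refl S)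
    (Equiv.subtypeEquivRight (fun x => by simp [Finset.mem_compl]))).trans
    (Equiv.sumCompl (· ∈ S))

lemma submatrix_eS {n : ℕ} (A : Matrix (Fin n) (Fin n) ℂ) (S : Finset (Fin n)) :
    A.submatrix (eS S) (eS S) =
      Matrix.fromBlocks (subm A S S) (subm A S Sᶜ) (subm A Sᶜ S) (subm A Sᶜ Sᶜ) := by
  ext i j
  rcases i with i | i <;> rcases j with j | j <;> rfl

theorem eigenvalue_iff_det_reduced
    {n : ℕ} (M : Matrix (Fin n) (Fin n) ℝ) (S : Finset (Fin n))
    (hS_nonempty : S.Nonempty) (hS_proper : S ≠ Finset.univ)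
    (l : ℂ) (hl : l ∉ spectrum ℂ (subm (M.map Complex.ofReal) Sᶜ Sᶜ)) :
    l ∈ spectrum ℂ (M.map Complex.ofReal) ↔
      (red (M.map Complex.ofReal) S l - l • 1).det = 0 := by
  classical
  set A : Matrix (Fin n) (Fin n) ℂ := M.map Complex.ofReal with hA
  have hDdet : (subm A Sᶜ Sᶜ - l • 1).det ≠ 0 := by
    intro h
    exact hl ((mem_spectrum_iff_det' _ _).mpr h)
  haveI : Invertible (subm A Sᶜ Sᶜ - l • 1) :=
    Matrix.invertibleOfIsUnitDet _ (isUnit_iff_ne_zero.mpr hDdet)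
  have hsub : (A - l • 1).submatrix (eS S) (eS S) =
      Matrix.fromBlocks (subm A S S - l • 1) (subm A S Sᶜ)
        (subm A Sᶜ S) (subm A Sᶜ Sᶜ - l • 1) := by
    have h1 : (A - l • 1).submatrix (eS S) (eS S) =
        A.submatrix (eS S) (eS S) - l • (1 : Matrix (Fin n) (Fin n) ℂ).submatrix (eS S) (eS S) :=
      rfl
    rw [h1, Matrix.submatrix_one_equiv, submatrix_eS, ← Matrix.fromBlocks_one,
      Matrix.fromBlocks_smul]
    ext i j
    rcases i with i | i <;> rcases j with j | j <;>
      simp [Matrix.fromBlocks]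
  have hred : red A S l - l • 1 =
      (subm A S S - l • 1) -
        subm A S Sᶜ * (subm A Sᶜ Sᶜ - l • 1)⁻¹ * subm A Sᶜ S := by
    unfold red
    exact sub_right_comm _ _ _
  have hdet : (A - l • 1).det =
      (subm A Sᶜ Sᶜ - l • 1).det * (red A S l - l • 1).det := by
    rw [← Matrix.det_submatrix_equiv_self (eS S), hsub, Matrix.det_fromBlocks₂₂, hred,
      Matrix.invOf_eq_nonsing_inv]
  rw [mem_spectrum_iff_det', hdet, mul_eq_zero]
  simp [hDdet]
end

section
/- Let A be a nonnegative irreducible n×n matrix with spectral radius ρ and Perron eigenvector v (so Av = ρv, v entrywise positive). For any nonempty proper subset S of {1,...,n}, the projection v_S of v onto the coordinates in S satisfies P_S(A) v_S = ρ v_S, where P_S(A) = A_{SS} − A_{SS̄}(A_{S̄S̄} − ρI)⁻¹ A_{S̄S} is the Perron complement. In particular, ρ(P_S(A)) = ρ(A). -/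
open Matrix

/-- Key combinatorial lemma: a nonnegative "tight set" on `Sᶜ` which absorbs all
edges of an irreducible matrix leads to a contradiction. -/
lemma noEscape {n : ℕ} (A : Matrix (Fin n) (Fin n) ℝ)
    (hA_nonneg : ∀ i j, 0 ≤ A i j) (hA_irred : Irred A)
    (v : Fin n → ℝ) (hv_pos : ∀ i, 0 < v i)
    (S : Finset (Fin n)) (hS_nonempty : S.Nonempty)
    (z : Fin n → ℝ)
    (h1 : ∀ j ∈ Sᶜ, 0 ≤ z j)
    (h2 : ∀ i ∈ Sᶜ, z i = 0 → (∑ j ∈ Sᶜ, A i j * z j ≤ 0 ∧ ∑ j ∈ S, A i j * v j ≤ 0))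
    (h3 : ∃ i0 ∈ Sᶜ, z i0 = 0) : False := by
  obtain ⟨s, hs⟩ := hS_nonempty
  obtain ⟨i0, hi0c, hi0z⟩ := h3
  set P : Fin n → Prop := fun i => i ∈ Sᶜ ∧ z i = 0 with hP
  have closure : ∀ i, P i → ∀ j, 0 < A i j → P j := by
    intro i ⟨hic, hiz⟩ j hij
    obtain ⟨hsum1, hsum2⟩ := h2 i hic hiz
    by_cases hj : j ∈ S
    · exfalso
      have hzero : ∑ j ∈ S, A i j * v j = 0 :=
        le_antisymm hsum2 (Finset.sum_nonneg fun k _ => mul_nonneg (hA_nonneg i k) (hv_pos k).le)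
      have := (Finset.sum_eq_zero_iff_of_nonneg
        (fun k _ => mul_nonneg (hA_nonneg i k) (hv_pos k).le)).mp hzero j hj
      exact absurd this (ne_of_gt (mul_pos hij (hv_pos j)))
    · have hjc : j ∈ Sᶜ := Finset.mem_compl.mpr hj
      have hzero : ∑ j ∈ Sᶜ, A i j * z j = 0 :=
        le_antisymm hsum1 (Finset.sum_nonneg fun k hk => mul_nonneg (hA_nonneg i k) (h1 k hk))
      have := (Finset.sum_eq_zero_iff_of_nonneg
        (fun k hk => mul_nonneg (hA_nonneg i k) (h1 k hk))).mp hzero j hjc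
      refine ⟨hjc, ?_⟩
      rcases mul_eq_zero.mp this with h | h
      · exact absurd h (ne_of_gt hij)
      · exact h
  have reach : ∀ j, Relation.TransGen (fun a b => 0 < A a b) i0 j → P j := by
    intro j h
    induction h with
    | single h => exact closure _ ⟨hi0c, hi0z⟩ _ h
    | tail _ h ih => exact closure _ ih _ h
  have := reach s (hA_irred i0 s)
  exact absurd hs (Finset.mem_compl.mp this.1)

/-- M-matrix style lemma: a solution of `(B − ρI) x = e ≥ 0` on `Sᶜ` is nonpositive. -/
lemma col_nonpos {n : ℕ} (A : Matrix (Fin n) (Fin n) ℝ)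
    (hA_nonneg : ∀ i j, 0 ≤ A i j) (hA_irred : Irred A)
    (v : Fin n → ℝ) (hv_pos : ∀ i, 0 < v i)
    (S : Finset (Fin n)) (hS_nonempty : S.Nonempty)
    (ρ : ℝ) (hρ : 0 < ρ)
    (hrow : ∀ i, ∑ j ∈ S, A i j * v j + ∑ j ∈ Sᶜ, A i j * v j = ρ * v i)
    (x e : ↥(Sᶜ) → ℝ) (he : ∀ i, 0 ≤ e i)
    (hx : ∀ i : ↥(Sᶜ), (∑ j : ↥(Sᶜ), A i.1 j.1 * x j) - ρ * x i = e i) :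
    ∀ k, x k ≤ 0 := by
  by_contra hcon
  push_neg at hcon
  obtain ⟨k, hk⟩ := hcon
  obtain ⟨i0, -, hmax⟩ := Finset.exists_max_image (Finset.univ : Finset ↥(Sᶜ))
    (fun i => x i / v i.1) ⟨k, Finset.mem_univ k⟩
  set t : ℝ := x i0 / v i0.1 with ht
  have ht_pos : 0 < t := lt_of_lt_of_le (div_pos hk (hv_pos k.1)) (hmax k (Finset.mem_univ k))
  have hbound : ∀ j : ↥(Sᶜ), x j ≤ t * v j.1 := by
    intro j
    have := hmax j (Finset.mem_univ j)
    calc x j = x j / v j.1 * v j.1 := (div_mul_cancel₀ _ (hv_pos j.1).ne').symm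
    _ ≤ t * v j.1 := by
        exact mul_le_mul_of_nonneg_right this (hv_pos j.1).le
  have hxi0 : x i0 = t * v i0.1 := by
    rw [ht, div_mul_cancel₀ _ (hv_pos i0.1).ne']
  set z : Fin n → ℝ := fun i => if h : i ∈ Sᶜ then t * v i - x ⟨i, h⟩ else 0 with hz
  have hz_eq : ∀ j : ↥(Sᶜ), z j.1 = t * v j.1 - x j := by
    intro j; simp only [hz, dif_pos j.2]
  refine noEscape A hA_nonneg hA_irred v hv_pos S hS_nonempty z ?_ ?_ ⟨i0.1, i0.2, ?_⟩
  · intro j hj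
    have := hbound ⟨j, hj⟩
    rw [hz_eq ⟨j, hj⟩]
    linarith
  · intro i hic hiz
    set I : ↥(Sᶜ) := ⟨i, hic⟩ with hI
    have hxI : x I = t * v i := by
      have := hz_eq I
      simp only [hI] at this ⊢
      rw [hiz] at this
      linarith
    have hq : 0 ≤ ∑ j ∈ S, A i j * v j :=
      Finset.sum_nonneg fun j _ => mul_nonneg (hA_nonneg i j) (hv_pos j).le
    have hsum_sub : ∑ j ∈ Sᶜ, A i j * z j = ∑ j : ↥(Sᶜ), A i j.1 * z j.1 :=
      (Finset.sum_coe_sort (Sᶜ) (fun j => A i j * z j)).symm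
    have key : ∑ j ∈ Sᶜ, A i j * z j
        = -(t * (∑ j ∈ S, A i j * v j) + e I) := by
      rw [hsum_sub]
      have expand : ∀ j : ↥(Sᶜ), A i j.1 * z j.1 = t * (A i j.1 * v j.1) - A i j.1 * x j := by
        intro j; rw [hz_eq j]; ring
      rw [Finset.sum_congr rfl (fun j _ => expand j), Finset.sum_sub_distrib,
        ← Finset.mul_sum]
      have h1' : ∑ j : ↥(Sᶜ), A i j.1 * v j.1 = ∑ j ∈ Sᶜ, A i j * v j :=
        Finset.sum_coe_sort (Sᶜ) (fun j => A i j * v j)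
      have h2' : ∑ j : ↥(Sᶜ), A i j.1 * x j = ρ * x I + e I := by
        have := hx I
        simp only [hI] at this ⊢
        linarith
      rw [h1', h2', hxI]
      have hrowi := hrow i
      nlinarith [hrowi]
    have hpos : 0 ≤ ∑ j ∈ Sᶜ, A i j * z j := by
      apply Finset.sum_nonneg
      intro j hj
      apply mul_nonneg (hA_nonneg i j)
      rw [hz_eq ⟨j, hj⟩]
      have := hbound ⟨j, hj⟩
      linarith
    constructor
    · rw [key]
      have := he I
      nlinarith
    · rw [key] at hpos
      have := he I
      nlinarith
  · rw [hz_eq i0]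
    linarith [hxi0]

/-- A nonnegative matrix with a positive eigenvector for a positive eigenvalue `ρ`
has spectral radius `ρ`. -/
lemma specRad_of_posEig {m : Type*} [Fintype m] [DecidableEq m] [Nonempty m]
    (M : Matrix m m ℝ) (hM : ∀ i j, 0 ≤ M i j)
    (u : m → ℝ) (hu : ∀ i, 0 < u i) (ρ : ℝ) (hρ : 0 < ρ)
    (h : M *ᵥ u = ρ • u) : specRad M = ρ := by
  set M' : Matrix m m ℂ := M.map Complex.ofReal with hM'
  set u' : m → ℂ := fun i => (u i : ℂ) with hu'
  have key : M' *ᵥ u' = (ρ : ℂ) • u' := by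
    funext i
    have hre : ∑ j, M i j * u j = ρ * u i := by
      have := congrFun h i
      simpa [Matrix.mulVec, dotProduct] using this
    simp only [Matrix.mulVec, dotProduct, hM', Matrix.map_apply, hu', Pi.smul_apply,
      smul_eq_mul]
    exact_mod_cast congrArg (Complex.ofReal) hre
  have hu'_ne : u' ≠ 0 := by
    intro h0
    have := congrFun h0 (Classical.arbitrary m)
    simp only [hu', Pi.zero_apply, Complex.ofReal_eq_zero] at this
    exact (hu _).ne' this
  have hmem : (ρ : ℂ) ∈ spectrum ℂ M' := by
    rw [spectrum.mem_iff]
    intro hunit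
    rw [Matrix.isUnit_iff_isUnit_det] at hunit
    have hdet : ((algebraMap ℂ (Matrix m m ℂ)) (ρ : ℂ) - M').det = 0 := by
      rw [← Matrix.exists_mulVec_eq_zero_iff]
      refine ⟨u', hu'_ne, ?_⟩
      rw [Algebra.algebraMap_eq_smul_one, Matrix.sub_mulVec, Matrix.smul_mulVec,
        Matrix.one_mulVec, key, sub_self]
    rw [hdet] at hunit
    exact hunit.ne_zero rfl
  have hbound : ∀ μ ∈ spectrum ℂ M', ‖μ‖ ≤ ρ := by
    intro μ hμ
    rw [spectrum.mem_iff] at hμ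
    have hdet : ((algebraMap ℂ (Matrix m m ℂ)) μ - M').det = 0 := by
      by_contra hne
      exact hμ ((Matrix.isUnit_iff_isUnit_det _).mpr (isUnit_iff_ne_zero.mpr hne))
    obtain ⟨x, hx_ne, hx0⟩ := (Matrix.exists_mulVec_eq_zero_iff).mpr hdet
    have heig : M' *ᵥ x = μ • x := by
      have := hx0
      rw [Algebra.algebraMap_eq_smul_one, Matrix.sub_mulVec, Matrix.smul_mulVec,
        Matrix.one_mulVec, sub_eq_zero] at this
      exact this.symm
    obtain ⟨k, hk⟩ := Function.ne_iff.mp hx_ne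
    obtain ⟨i0, -, hmax⟩ := Finset.exists_max_image (Finset.univ : Finset m)
      (fun i => ‖x i‖ / u i) ⟨k, Finset.mem_univ k⟩
    set t : ℝ := ‖x i0‖ / u i0 with ht
    have ht_pos : 0 < t :=
      lt_of_lt_of_le (div_pos (by simpa using hk) (hu k)) (hmax k (Finset.mem_univ k))
    have hbnd : ∀ j, ‖x j‖ ≤ t * u j := by
      intro j
      have := hmax j (Finset.mem_univ j)
      calc ‖x j‖ = ‖x j‖ / u j * u j :=
            (div_mul_cancel₀ _ (hu j).ne').symm
      _ ≤ t * u j := mul_le_mul_of_nonneg_right this (hu j).le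
    have habs : ‖x i0‖ = t * u i0 := (div_mul_cancel₀ _ (hu i0).ne').symm
    have hxi0_pos : 0 < ‖x i0‖ := by
      rw [habs]; exact mul_pos ht_pos (hu i0)
    have step : ‖μ‖ * ‖x i0‖ ≤ ρ * ‖x i0‖ := by
      have h1 : ‖μ‖ * ‖x i0‖ = ‖(M' *ᵥ x) i0‖ := by
        rw [heig]; simp [Pi.smul_apply, smul_eq_mul, _root_.map_mul]
      have h2 : ‖(M' *ᵥ x) i0‖ ≤ ∑ j, M i0 j * ‖x j‖ := by
        simp only [Matrix.mulVec, dotProduct, hM', Matrix.map_apply]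
        refine le_trans (norm_sum_le _ _) ?_
        apply Finset.sum_le_sum
        intro j _
        rw [norm_mul, Complex.norm_real, Real.norm_of_nonneg (hM i0 j)]
      have h3 : ∑ j, M i0 j * ‖x j‖ ≤ t * ∑ j, M i0 j * u j := by
        rw [Finset.mul_sum]
        refine Finset.sum_le_sum fun j _ => ?_
        calc M i0 j * ‖x j‖ ≤ M i0 j * (t * u j) :=
              mul_le_mul_of_nonneg_left (hbnd j) (hM i0 j)
        _ = t * (M i0 j * u j) := by ring
      have h4 : ∑ j, M i0 j * u j = ρ * u i0 := by
        have := congrFun h i0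
        simpa [Matrix.mulVec, dotProduct] using this
      have h5 : t * (ρ * u i0) = ρ * ‖x i0‖ := by
        rw [habs]; ring
      calc ‖μ‖ * ‖x i0‖ = ‖(M' *ᵥ x) i0‖ := h1
      _ ≤ ∑ j, M i0 j * ‖x j‖ := h2
      _ ≤ t * ∑ j, M i0 j * u j := h3
      _ = t * (ρ * u i0) := by rw [h4]
      _ = ρ * ‖x i0‖ := h5
    exact le_of_mul_le_mul_right (by linarith [step]) hxi0_pos
  have hρmem : ρ ∈ (fun z : ℂ => ‖z‖) '' spectrum ℂ M' :=
    ⟨(ρ : ℂ), hmem, by simp [abs_of_pos hρ]⟩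
  have hbdd : BddAbove ((fun z : ℂ => ‖z‖) '' spectrum ℂ M') := by
    refine ⟨ρ, ?_⟩
    rintro r ⟨μ, hμ, rfl⟩
    exact hbound μ hμ
  rw [specRad, specRadC]
  exact le_antisymm (csSup_le ⟨ρ, hρmem⟩ (by rintro r ⟨μ, hμ, rfl⟩; exact hbound μ hμ))
    (le_csSup hbdd hρmem)

theorem perron_complement_eigenvector_and_spectral_radius
    {n : ℕ} (A : Matrix (Fin n) (Fin n) ℝ)
    (hA_nonneg : ∀ i j, 0 ≤ A i j) (hA_irred : Irred A)
    (v : Fin n → ℝ) (hv_pos : ∀ i, 0 < v i)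
    (h_eig : A *ᵥ v = specRad A • v)
    (S : Finset (Fin n)) (hS_nonempty : S.Nonempty) (hS_proper : S ≠ Finset.univ) :
    red A S (specRad A) *ᵥ (fun i : S => v i.1) = specRad A • (fun i : S => v i.1) ∧
      specRad (red A S (specRad A)) = specRad A := by
  set ρ : ℝ := specRad A with hρdef
  have hrow : ∀ i, ∑ j ∈ S, A i j * v j + ∑ j ∈ Sᶜ, A i j * v j = ρ * v i := by
    intro i
    rw [Finset.sum_add_sum_compl]
    have := congrFun h_eig i
    simpa [Matrix.mulVec, dotProduct] using this
  have hρ : 0 < ρ := by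
    obtain ⟨s, hs⟩ := hS_nonempty
    obtain ⟨k, hk⟩ : ∃ k, 0 < A s k := by
      obtain ⟨c, hc, -⟩ := Relation.TransGen.head'_iff.mp (hA_irred s s)
      exact ⟨c, hc⟩
    have hsum : 0 < ∑ j, A s j * v j := by
      apply Finset.sum_pos' (fun j _ => mul_nonneg (hA_nonneg s j) (hv_pos j).le)
      exact ⟨k, Finset.mem_univ k, mul_pos hk (hv_pos k)⟩
    have : ∑ j, A s j * v j = ρ * v s := by
      rw [← Finset.sum_add_sum_compl S]
      exact hrow s
    rw [this] at hsum
    by_contra hle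
    push_neg at hle
    nlinarith [hv_pos s, hsum]
  haveI : Nonempty ↥S := ⟨⟨hS_nonempty.choose, hS_nonempty.choose_spec⟩⟩
  have hScne : (Sᶜ : Finset (Fin n)).Nonempty := by
    rw [Finset.nonempty_iff_ne_empty]
    intro h0
    exact hS_proper (by simpa [Finset.compl_eq_empty_iff] using h0)
  set B' : Matrix ↥(Sᶜ) ↥(Sᶜ) ℝ := subm A Sᶜ Sᶜ - ρ • 1 with hB'
  have hB'mulVec : ∀ (x : ↥(Sᶜ) → ℝ) (i : ↥(Sᶜ)),
      (B' *ᵥ x) i = (∑ j : ↥(Sᶜ), A i.1 j.1 * x j) - ρ * x i := by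
    intro x i
    rw [hB', Matrix.sub_mulVec, Matrix.smul_mulVec, Matrix.one_mulVec]
    simp [Matrix.mulVec, dotProduct, subm]
  have hdet : IsUnit B'.det := by
    rw [isUnit_iff_ne_zero]
    intro hdet0
    obtain ⟨x, hx_ne, hx0⟩ := Matrix.exists_mulVec_eq_zero_iff.mpr hdet0
    have hx' : ∀ i : ↥(Sᶜ), (∑ j : ↥(Sᶜ), A i.1 j.1 * x j) - ρ * x i = 0 := by
      intro i
      rw [← hB'mulVec x i, hx0]
      rfl
    have hle := col_nonpos A hA_nonneg hA_irred v hv_pos S hS_nonempty ρ hρ hrow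
      x 0 (fun i => le_refl 0) (fun i => by simpa using hx' i)
    have hge := col_nonpos A hA_nonneg hA_irred v hv_pos S hS_nonempty ρ hρ hrow
      (-x) 0 (fun i => le_refl 0) (fun i => by
        simp only [Pi.neg_apply, Pi.zero_apply]
        have := hx' i
        have hsum : ∑ j : ↥(Sᶜ), A i.1 j.1 * (-x j) = -∑ j : ↥(Sᶜ), A i.1 j.1 * x j := by
          rw [← Finset.sum_neg_distrib]
          exact Finset.sum_congr rfl fun j _ => by ring
        rw [hsum]
        linarith)
    apply hx_ne
    funext i
    have := hle i
    have := hge i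
    simp only [Pi.neg_apply] at *
    have : x i = 0 := by linarith
    simpa using this
  have hinv : ∀ k l, B'⁻¹ k l ≤ 0 := by
    intro k l
    have hmul : B' * B'⁻¹ = 1 := Matrix.mul_nonsing_inv B' hdet
    have hx : ∀ i : ↥(Sᶜ), (∑ j : ↥(Sᶜ), A i.1 j.1 * B'⁻¹ j l) - ρ * B'⁻¹ i l
        = (1 : Matrix ↥(Sᶜ) ↥(Sᶜ) ℝ) i l := by
      intro i
      have := congrFun (congrFun hmul i) l
      rw [Matrix.mul_apply] at this
      calc (∑ j : ↥(Sᶜ), A i.1 j.1 * B'⁻¹ j l) - ρ * B'⁻¹ i l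
          = ∑ j : ↥(Sᶜ), B' i j * B'⁻¹ j l := by
            rw [hB']
            have : ∀ j : ↥(Sᶜ), (subm A Sᶜ Sᶜ - ρ • 1) i j * B'⁻¹ j l
                = A i.1 j.1 * B'⁻¹ j l - ρ * ((1 : Matrix ↥(Sᶜ) ↥(Sᶜ) ℝ) i j * B'⁻¹ j l) := by
              intro j
              simp only [Matrix.sub_apply, Matrix.smul_apply, subm, smul_eq_mul]
              ring
            rw [Finset.sum_congr rfl (fun j _ => this j), Finset.sum_sub_distrib,
              ← Finset.mul_sum]
            congr 1
            congr 1
            have := congrFun (congrFun (Matrix.one_mul B'⁻¹) i) l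
            rw [Matrix.mul_apply] at this
            rw [this]
      _ = (1 : Matrix ↥(Sᶜ) ↥(Sᶜ) ℝ) i l := this
    have he : ∀ i : ↥(Sᶜ), 0 ≤ (1 : Matrix ↥(Sᶜ) ↥(Sᶜ) ℝ) i l := by
      intro i
      by_cases h : i = l <;> simp [Matrix.one_apply, h]
    exact col_nonpos A hA_nonneg hA_irred v hv_pos S hS_nonempty ρ hρ hrow
      (fun j => B'⁻¹ j l) (fun i => (1 : Matrix ↥(Sᶜ) ↥(Sᶜ) ℝ) i l) he hx k
  -- the eigenvector equation
  set vS : ↥S → ℝ := fun i => v i.1 with hvS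
  set vC : ↥(Sᶜ) → ℝ := fun i => v i.1 with hvC
  have hBvC : B' *ᵥ vC = -(subm A Sᶜ S *ᵥ vS) := by
    funext i
    rw [hB'mulVec vC i]
    have hA1 : ∑ j : ↥(Sᶜ), A i.1 j.1 * vC j = ∑ j ∈ Sᶜ, A i.1 j * v j :=
      Finset.sum_coe_sort (Sᶜ) (fun j => A i.1 j * v j)
    have hA2 : (subm A Sᶜ S *ᵥ vS) i = ∑ j ∈ S, A i.1 j * v j := by
      simp only [Matrix.mulVec, dotProduct, subm]
      exact Finset.sum_coe_sort S (fun j => A i.1 j * v j)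
    simp only [Pi.neg_apply, hA2, hA1]
    have := hrow i.1
    simp only [hvC]
    linarith
  have hvCeq : vC = -(B'⁻¹ *ᵥ (subm A Sᶜ S *ᵥ vS)) := by
    have h1 : B'⁻¹ *ᵥ (B' *ᵥ vC) = vC := by
      rw [Matrix.mulVec_mulVec, Matrix.nonsing_inv_mul B' hdet, Matrix.one_mulVec]
    rw [← h1, hBvC, Matrix.mulVec_neg]
  have hfirst : red A S ρ *ᵥ vS = ρ • vS := by
    have hred : red A S ρ = subm A S S - subm A S Sᶜ * B'⁻¹ * subm A Sᶜ S := rfl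
    rw [hred, Matrix.sub_mulVec]
    have h2 : (subm A S Sᶜ * B'⁻¹ * subm A Sᶜ S) *ᵥ vS = -(subm A S Sᶜ *ᵥ vC) := by
      rw [← Matrix.mulVec_mulVec, ← Matrix.mulVec_mulVec, ← Matrix.mulVec_neg]
      congr 1
      rw [hvCeq, neg_neg]
    rw [h2, sub_neg_eq_add]
    funext i
    have hA1 : (subm A S S *ᵥ vS) i = ∑ j ∈ S, A i.1 j * v j := by
      simp only [Matrix.mulVec, dotProduct, subm]
      exact Finset.sum_coe_sort S (fun j => A i.1 j * v j)
    have hA2 : (subm A S Sᶜ *ᵥ vC) i = ∑ j ∈ Sᶜ, A i.1 j * v j := by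
      simp only [Matrix.mulVec, dotProduct, subm]
      exact Finset.sum_coe_sort (Sᶜ) (fun j => A i.1 j * v j)
    simp only [Pi.add_apply, hA1, hA2, Pi.smul_apply, smul_eq_mul]
    exact hrow i.1
  have hvS_pos : ∀ i : ↥S, 0 < vS i := fun i => hv_pos i.1
  -- nonnegativity of the reduction
  have hM_nonneg : ∀ i j, 0 ≤ red A S ρ i j := by
    intro i j
    have hred : red A S ρ i j
        = subm A S S i j - (subm A S Sᶜ * B'⁻¹ * subm A Sᶜ S) i j := rfl
    rw [hred]
    have hprod : (subm A S Sᶜ * B'⁻¹ * subm A Sᶜ S) i j ≤ 0 := by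
      rw [Matrix.mul_apply]
      apply Finset.sum_nonpos
      intro k _
      apply mul_nonpos_of_nonpos_of_nonneg
      · rw [Matrix.mul_apply]
        apply Finset.sum_nonpos
        intro l _
        exact mul_nonpos_of_nonneg_of_nonpos (hA_nonneg i.1 l.1) (hinv l k)
      · exact hA_nonneg k.1 j.1
    have : (0 : ℝ) ≤ subm A S S i j := hA_nonneg i.1 j.1
    linarith
  refine ⟨hfirst, ?_⟩
  exact specRad_of_posEig (red A S ρ) hM_nonneg vS hvS_pos ρ hρ hfirst
end

section
/- Let M be an n×n real matrix with a simple eigenvalue λ₀ and eigenvector v, let S ⊆ {1,...,n} with λ₀ ∉ σ(M_{S̄S̄}), and suppose there is a permutation φ of S such that R_S(M)(λ₀)_{ij} = R_S(M)(λ₀)_{φ(i)φ(j)} for all i, j ∈ S, where R_S(M)(λ) is the isospectral reduction of M over S. If λ₀ is a simple eigenvalue of R_S(M)(λ₀) and v_S ≠ 0, then v_i = ± v_{φ(i)} for all i ∈ S. -/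
/-! Restricted to `S`, the eigenvector `v` is an eigenvector of `R = R_S(M)(l)` for `l`: the
`Sᶜ`-rows of `M v = l v` determine `v` on `Sᶜ` from `v` on `S`, since `M_{S̄S̄} - l` is invertible.
As `R` is invariant under `φ`, `v_S ∘ φ` is an eigenvector for `l` as well, so simplicity gives
`v_S ∘ φ = c • v_S`. Iterating up to the order of `φ` yields `c ^ k = 1`, hence `c = ±1` over `ℝ`. -/

open Matrix

section Reduction

variable {n : ℕ} {α : Type*} [Field α]

theorem subm_mulVec_add_subm_compl_mulVec (M : Matrix (Fin n) (Fin n) α) (R S : Finset (Fin n))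
    (v : Fin n → α) :
    subm M R S *ᵥ (fun j : S => v j) + subm M R Sᶜ *ᵥ (fun j : ↥(Sᶜ : Finset (Fin n)) => v j) =
      fun i : R => (M *ᵥ v) i := by
  funext i
  simp only [Pi.add_apply, mulVec, dotProduct, subm]
  rw [Finset.sum_coe_sort S fun j => M i j * v j, Finset.sum_coe_sort Sᶜ fun j => M i j * v j,
    Finset.sum_add_sum_compl]

theorem red_mulVec_of_mulVec_eq_smul {M : Matrix (Fin n) (Fin n) α} {S : Finset (Fin n)} {l : α}
    (hl : l ∉ spectrum α (subm M Sᶜ Sᶜ)) {v : Fin n → α} (hv : M *ᵥ v = l • v) :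
    red M S l *ᵥ (fun i : S => v i) = l • fun i : S => v i := by
  set vS : S → α := fun i => v i
  set vT : ↥(Sᶜ : Finset (Fin n)) → α := fun i => v i
  have hunit : IsUnit (subm M Sᶜ Sᶜ - l • 1).det := by
    rw [← Matrix.isUnit_iff_isUnit_det, ← neg_sub, ← Algebra.algebraMap_eq_smul_one]
    exact (spectrum.notMem_iff.mp hl).neg
  have hS := subm_mulVec_add_subm_compl_mulVec M S S v
  have hT := subm_mulVec_add_subm_compl_mulVec M Sᶜ S v
  rw [hv] at hS hT
  have hvT : subm M Sᶜ S *ᵥ vS = -((subm M Sᶜ Sᶜ - l • 1) *ᵥ vT) := by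
    rw [sub_mulVec, smul_mulVec, one_mulVec, neg_sub, eq_sub_iff_add_eq, hT]
    rfl
  rw [red, sub_mulVec, ← mulVec_mulVec, ← mulVec_mulVec, hvT, mulVec_neg, mulVec_mulVec,
    nonsing_inv_mul _ hunit, one_mulVec, mulVec_neg, sub_neg_eq_add, hS]
  rfl

end Reduction

theorem Matrix.exists_smul_eq_of_rootMultiplicity_charpoly_le_one {m K : Type*} [Fintype m]
    [DecidableEq m] [Field K] {A : Matrix m m K} {l : K}
    (hl : A.charpoly.rootMultiplicity l ≤ 1) {u w : m → K} (hu : A *ᵥ u = l • u)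
    (hw : A *ᵥ w = l • w) (hu0 : u ≠ 0) : ∃ c : K, c • u = w := by
  set E := Module.End.eigenspace (toLin' A) l
  have huE : u ∈ E := Module.End.mem_eigenspace_iff.mpr (by rwa [toLin'_apply])
  have hwE : w ∈ E := Module.End.mem_eigenspace_iff.mpr (by rwa [toLin'_apply])
  have hE : Module.finrank K E = 1 := by
    refine le_antisymm ?_ ?_
    · exact (LinearMap.finrank_eigenspace_le (toLin' A) l).trans (by rwa [charpoly_toLin'])
    · exact Submodule.one_le_finrank_iff.mpr fun h => hu0 (by simpa [h] using huE)
  rw [eq_span_singleton_of_mem_of_finrank_eq_one hE huE hu0] at hwE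
  exact Submodule.mem_span_singleton.mp hwE

theorem Matrix.mulVec_comp_eq_smul_of_apply_perm_eq {m R : Type*} [Fintype m] [CommSemiring R]
    {A : Matrix m m R} {φ : Equiv.Perm m} (hA : ∀ i j, A i j = A (φ i) (φ j)) {l : R}
    {x : m → R} (hx : A *ᵥ x = l • x) : A *ᵥ (x ∘ φ) = l • (x ∘ φ) := by
  have hAφ : A = A.submatrix φ φ := Matrix.ext hA
  rw [hAφ, submatrix_mulVec_equiv, Function.comp_assoc, Equiv.self_comp_symm,
    Function.comp_id, hx, Pi.smul_comp]

theorem Equiv.Perm.comp_pow_eq_pow_smul {α M R : Type*} [Monoid R] [MulAction R M]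
    {x : α → M} {φ : Equiv.Perm α} {c : R} (h : x ∘ φ = c • x) (k : ℕ) :
    x ∘ ⇑(φ ^ k) = c ^ k • x := by
  induction k with
  | zero => simp
  | succ k ih => rw [pow_succ, Equiv.Perm.coe_mul, ← Function.comp_assoc, ih, Pi.smul_comp, h,
      smul_smul, pow_succ]

theorem Equiv.Perm.eq_one_or_eq_neg_one_of_comp_eq_smul {α R : Type*} [Finite α] [Ring R]
    [LinearOrder R] [IsStrictOrderedRing R] {x : α → R} (hx : x ≠ 0) {φ : Equiv.Perm α} {c : R}
    (h : x ∘ φ = c • x) : c = 1 ∨ c = -1 := by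
  obtain ⟨i, hi⟩ := Function.ne_iff.mp hx
  have hc : c ^ orderOf φ = 1 := by
    have hxi := congrFun (comp_pow_eq_pow_smul h (orderOf φ)) i
    rw [pow_orderOf_eq_one, Equiv.Perm.coe_one, Function.comp_id, Pi.smul_apply, smul_eq_mul] at hxi
    exact (right_eq_mul₀ hi).mp hxi
  rcases (pow_eq_one_iff_of_ne_zero (orderOf_pos φ).ne').mp hc with h1 | ⟨h1, -⟩
  exacts [.inl h1, .inr h1]

theorem latent_symmetry_eigenvector_sign_general
    {n : ℕ} (M : Matrix (Fin n) (Fin n) ℝ) (S : Finset (Fin n))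
    (l : ℝ) (hl : l ∉ spectrum ℝ (subm M Sᶜ Sᶜ))
    (v : Fin n → ℝ) (h_eig : M *ᵥ v = l • v)
    (φ : Equiv.Perm S)
    (h_auto : ∀ i j : S, red M S l i j = red M S l (φ i) (φ j))
    (h_simple_red : (red M S l).charpoly.rootMultiplicity l = 1)
    (hvS_ne : (fun i : S => v i.1) ≠ 0) :
    (∀ i : S, v i.1 = v (φ i).1) ∨ (∀ i : S, v i.1 = -v (φ i).1) := by
  have hvS := red_mulVec_of_mulVec_eq_smul hl h_eig
  obtain ⟨c, hc⟩ := exists_smul_eq_of_rootMultiplicity_charpoly_le_one h_simple_red.le hvS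
    (mulVec_comp_eq_smul_of_apply_perm_eq h_auto hvS) hvS_ne
  rcases φ.eq_one_or_eq_neg_one_of_comp_eq_smul hvS_ne hc.symm with rfl | rfl
  · exact .inl fun i => by simpa using congrFun hc i
  · exact .inr fun i => by simpa [neg_eq_iff_eq_neg] using congrFun hc i

theorem latent_symmetry_eigenvector_sign
    {n : ℕ} (M : Matrix (Fin n) (Fin n) ℝ) (S : Finset (Fin n))
    (l : ℝ) (hl : l ∉ spectrum ℝ (subm M Sᶜ Sᶜ))
    (h_simple : M.charpoly.rootMultiplicity l = 1)
    (v : Fin n → ℝ) (hv_ne : v ≠ 0) (h_eig : M *ᵥ v = l • v)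
    (φ : Equiv.Perm S)
    (h_auto : ∀ i j : S, red M S l i j = red M S l (φ i) (φ j))
    (h_simple_red : (red M S l).charpoly.rootMultiplicity l = 1)
    (hvS_ne : (fun i : S => v i.1) ≠ 0) :
    (∀ i : S, v i.1 = v (φ i).1) ∨ (∀ i : S, v i.1 = -v (φ i).1) :=
  latent_symmetry_eigenvector_sign_general M S l hl v h_eig φ h_auto h_simple_red hvS_ne
end

section
/- Let A be the adjacency matrix of a strongly connected nonnegatively weighted graph G with Perron eigenvalue ρ and (positive) Perron eigenvector v. If vertices a and b are latently symmetric — i.e., there is a vertex subset S containing a and b such that the isospectral reduction R_S(A)(λ) admits an automorphism φ (a permutation of S with R_S(A)(λ)_{ij} = R_S(A)(λ)_{φ(i)φ(j)} as rational functions for all i,j ∈ S) with φ(a) = b — then v_a = v_b, i.e., a and b have the same eigenvector centrality. -/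
open Matrix

section Main
variable {n : ℕ} (A : Matrix (Fin n) (Fin n) ℝ) (S : Finset (Fin n))

-- block decomposition of mulVec
lemma hsplit (w : Fin n → ℝ) (i : Fin n) :
    (A *ᵥ w) i = (∑ j : {x // x ∈ S}, A i ↑j * w ↑j)
      + (∑ j : {x // x ∈ (Sᶜ : Finset (Fin n))}, A i ↑j * w ↑j) := by
  rw [Finset.sum_coe_sort S (fun j => A i j * w j),
    Finset.sum_coe_sort (Sᶜ) (fun j => A i j * w j),
    Finset.sum_add_sum_compl S (fun j => A i j * w j)]
  simp [Matrix.mulVec, dotProduct]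

lemma submS_mulVec (T : Finset (Fin n)) (u : {x // x ∈ S} → ℝ) (i : {x // x ∈ T}) :
    (subm A T S *ᵥ u) i = ∑ j : {x // x ∈ S}, A ↑i ↑j * u j := rfl

lemma hblockS (uS : {x // x ∈ S} → ℝ) (uC : {x // x ∈ (Sᶜ : Finset (Fin n))} → ℝ)
    (g : Fin n → ℝ) (hgS : ∀ j : {x // x ∈ S}, g ↑j = uS j)
    (hgC : ∀ j : {x // x ∈ (Sᶜ : Finset (Fin n))}, g ↑j = uC j)
    (i : {x // x ∈ S}) :
    (A *ᵥ g) ↑i = (subm A S S *ᵥ uS) i + (subm A S Sᶜ *ᵥ uC) i := by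
  rw [hsplit A S g ↑i, submS_mulVec, submS_mulVec]
  congr 1
  · exact Finset.sum_congr rfl fun j _ => by rw [hgS j]
  · exact Finset.sum_congr rfl fun j _ => by rw [hgC j]

lemma hblockC (uS : {x // x ∈ S} → ℝ) (uC : {x // x ∈ (Sᶜ : Finset (Fin n))} → ℝ)
    (g : Fin n → ℝ) (hgS : ∀ j : {x // x ∈ S}, g ↑j = uS j)
    (hgC : ∀ j : {x // x ∈ (Sᶜ : Finset (Fin n))}, g ↑j = uC j)
    (i : {x // x ∈ (Sᶜ : Finset (Fin n))}) :
    (A *ᵥ g) ↑i = (subm A Sᶜ S *ᵥ uS) i + (subm A Sᶜ Sᶜ *ᵥ uC) i := by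
  rw [hsplit A S g ↑i, submS_mulVec, submS_mulVec]
  congr 1
  · exact Finset.sum_congr rfl fun j _ => by rw [hgS j]
  · exact Finset.sum_congr rfl fun j _ => by rw [hgC j]

end Main

variable {n : ℕ} {A : Matrix (Fin n) (Fin n) ℝ} {ρ : ℝ} {v : Fin n → ℝ}

lemma prop_zero (hA : ∀ i j, 0 ≤ A i j) (hirr : Irred A)
    (z : Fin n → ℝ) (hz : ∀ i, 0 ≤ z i)
    (hle : ∀ i, (A *ᵥ z) i ≤ ρ * z i) {k : Fin n} (hk : z k = 0) :
    ∀ j, z j = 0 := by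
  have step : ∀ i j, z i = 0 → 0 < A i j → z j = 0 := by
    intro i j hi hij
    have h1 : (A *ᵥ z) i ≤ 0 := by simpa [hi] using hle i
    have h2 : ∀ l ∈ Finset.univ, 0 ≤ A i l * z l := fun l _ => mul_nonneg (hA i l) (hz l)
    have h3 : (A *ᵥ z) i = ∑ l, A i l * z l := by
      simp [Matrix.mulVec, dotProduct]
    have h4 : ∑ l, A i l * z l = 0 :=
      le_antisymm (h3 ▸ h1) (Finset.sum_nonneg h2)
    have h5 := (Finset.sum_eq_zero_iff_of_nonneg h2).mp h4 j (Finset.mem_univ j)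
    exact (mul_eq_zero.mp h5).resolve_left (ne_of_gt hij)
  intro j
  have hpath := hirr k j
  induction hpath with
  | single h => exact step _ _ hk h
  | tail _ h ih => exact step _ _ ih h

lemma mulVec_lin (w z : Fin n → ℝ) (t : ℝ) (i : Fin n) :
    (A *ᵥ (fun j => t * w j - z j)) i = t * (A *ᵥ w) i - (A *ᵥ z) i := by
  simp only [Matrix.mulVec, dotProduct, Finset.mul_sum, ← Finset.sum_sub_distrib]
  exact Finset.sum_congr rfl fun j _ => by ring

lemma subinv_zero (hA : ∀ i j, 0 ≤ A i j) (hirr : Irred A)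
    (hv : ∀ i, 0 < v i) (heig : ∀ i, (A *ᵥ v) i = ρ * v i)
    (w : Fin n → ℝ) (hw : ∀ i, 0 ≤ w i)
    (hge : ∀ i, ρ * w i ≤ (A *ᵥ w) i) {k : Fin n} (hk : w k = 0) :
    ∀ j, w j = 0 := by
  obtain ⟨m, -, hm⟩ := Finset.exists_max_image Finset.univ (fun i => w i / v i)
    ⟨k, Finset.mem_univ k⟩
  set t := w m / v m with ht
  have hwt : ∀ i, w i ≤ t * v i := by
    intro i
    have h := hm i (Finset.mem_univ i)
    have := mul_le_mul_of_nonneg_right h (le_of_lt (hv i))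
    calc w i = (w i / v i) * v i := (div_mul_cancel₀ (w i) (ne_of_gt (hv i))).symm
    _ ≤ t * v i := this
  have hz : ∀ i, 0 ≤ t * v i - w i := fun i => sub_nonneg.mpr (hwt i)
  have hzm : t * v m - w m = 0 := by
    rw [ht, div_mul_cancel₀ _ (ne_of_gt (hv m)), sub_self]
  have hle : ∀ i, (A *ᵥ (fun j => t * v j - w j)) i ≤ ρ * (t * v i - w i) := by
    intro i
    rw [mulVec_lin, heig i]
    have := hge i
    nlinarith [hge i]
  have hall := prop_zero hA hirr _ hz hle hzm
  have hwk : ∀ j, w j = t * v j := fun j => by have := hall j; linarith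
  have ht0 : t = 0 := by
    have := hwk k
    rw [hk] at this
    rcases mul_eq_zero.mp this.symm with h | h
    · exact h
    · exact absurd h (ne_of_gt (hv k))
  intro j; rw [hwk j, ht0, zero_mul]

lemma eig_unique (hA : ∀ i j, 0 ≤ A i j) (hirr : Irred A)
    (hv : ∀ i, 0 < v i) (heig : ∀ i, (A *ᵥ v) i = ρ * v i)
    (w : Fin n → ℝ) (hw : ∀ i, (A *ᵥ w) i = ρ * w i) (k : Fin n) :
    ∃ t, ∀ i, w i = t * v i := by
  obtain ⟨m, -, hm⟩ := Finset.exists_min_image Finset.univ (fun i => w i / v i)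
    ⟨k, Finset.mem_univ k⟩
  set t := w m / v m with ht
  refine ⟨t, ?_⟩
  have hwt : ∀ i, t * v i ≤ w i := by
    intro i
    have h := hm i (Finset.mem_univ i)
    have := mul_le_mul_of_nonneg_right h (le_of_lt (hv i))
    calc t * v i ≤ (w i / v i) * v i := this
    _ = w i := div_mul_cancel₀ (w i) (ne_of_gt (hv i))
  have hz : ∀ i, 0 ≤ -(t * v i - w i) := fun i => by have := hwt i; linarith
  have hzm : -(t * v m - w m) = 0 := by
    rw [ht, div_mul_cancel₀ _ (ne_of_gt (hv m)), sub_self, neg_zero]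
  have hle : ∀ i, (A *ᵥ (fun j => -(t * v j - w j))) i ≤ ρ * -(t * v i - w i) := by
    intro i
    have : (A *ᵥ (fun j => -(t * v j - w j))) i
        = -( (A *ᵥ (fun j => t * v j - w j)) i ) := by
      simp only [Matrix.mulVec, dotProduct, ← Finset.sum_neg_distrib]
      exact Finset.sum_congr rfl fun j _ => by ring
    rw [this, mulVec_lin, heig i, hw i]
    ring_nf
    exact le_refl _
  have hall := prop_zero hA hirr _ hz hle hzm
  intro i
  have := hall i
  linarith



theorem latently_symmetric_vertices_equal_eigenvector_centrality
    {n : ℕ} (A : Matrix (Fin n) (Fin n) ℝ)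
    (hA_nonneg : ∀ i j, 0 ≤ A i j) (hA_irred : Irred A)
    (v : Fin n → ℝ) (hv_pos : ∀ i, 0 < v i)
    (h_eig : A *ᵥ v = specRad A • v)
    (S : Finset (Fin n)) (a b : Fin n) (ha : a ∈ S) (hb : b ∈ S)
    (φ : Equiv.Perm S)
    (h_auto : ∀ l : ℝ, IsUnit (subm A Sᶜ Sᶜ - l • 1) →
      ∀ i j : S, red A S l i j = red A S l (φ i) (φ j))
    (hφab : φ ⟨a, ha⟩ = ⟨b, hb⟩) :
    v a = v b := by
  classical
  set ρ := specRad A with hρdef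
  have heig : ∀ i, (A *ᵥ v) i = ρ * v i := by
    intro i; rw [h_eig]; simp
  -- Step 1: invertibility of the lower-right block at ρ
  have hU : IsUnit (subm A Sᶜ Sᶜ - ρ • 1) := by
    rw [Matrix.isUnit_iff_isUnit_det, isUnit_iff_ne_zero]
    intro hdet
    obtain ⟨x, hx0, hxM⟩ := Matrix.exists_mulVec_eq_zero_iff.mpr hdet
    have hBx : ∀ i : {y // y ∈ (Sᶜ : Finset (Fin n))},
        (subm A Sᶜ Sᶜ *ᵥ x) i = ρ * x i := by
      intro i
      have h := congrFun hxM i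
      rw [Matrix.sub_mulVec, Matrix.smul_mulVec, Matrix.one_mulVec] at h
      have h2 : (subm A Sᶜ Sᶜ *ᵥ x) i - ρ * x i = 0 := h
      linarith
    set w : Fin n → ℝ :=
      fun j => if h : j ∈ (Sᶜ : Finset (Fin n)) then |x ⟨j, h⟩| else 0 with hwdef
    have hwval : ∀ j : {y // y ∈ (Sᶜ : Finset (Fin n))}, w ↑j = |x j| :=
      fun j => dif_pos j.2
    have hw0 : ∀ i, i ∉ (Sᶜ : Finset (Fin n)) → w i = 0 := fun i hi => dif_neg hi
    have hwnn : ∀ i, 0 ≤ w i := by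
      intro i
      by_cases h : i ∈ (Sᶜ : Finset (Fin n))
      · rw [hwval ⟨i, h⟩]; exact abs_nonneg _
      · rw [hw0 i h]
    have hge : ∀ i, ρ * w i ≤ (A *ᵥ w) i := by
      intro i
      have hAw : (A *ᵥ w) i = ∑ j, A i j * w j := by simp [Matrix.mulVec, dotProduct]
      by_cases hi : i ∈ (Sᶜ : Finset (Fin n))
      · have h1 : ∑ j ∈ (Sᶜ : Finset (Fin n)), A i j * w j ≤ (A *ᵥ w) i := by
          rw [hAw]
          exact Finset.sum_le_sum_of_subset_of_nonneg (Finset.subset_univ _)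
            (fun j _ _ => mul_nonneg (hA_nonneg i j) (hwnn j))
        have h2 : ∑ j ∈ (Sᶜ : Finset (Fin n)), A i j * w j
            = ∑ j : {y // y ∈ (Sᶜ : Finset (Fin n))}, A i ↑j * |x j| := by
          rw [← Finset.sum_coe_sort (Sᶜ) (fun j => A i j * w j)]
          exact Finset.sum_congr rfl fun j _ => by rw [hwval j]
        have h3 : |ρ * x ⟨i, hi⟩|
            ≤ ∑ j : {y // y ∈ (Sᶜ : Finset (Fin n))}, A i ↑j * |x j| := by
          rw [← hBx ⟨i, hi⟩, submS_mulVec]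
          calc |∑ j : {y // y ∈ (Sᶜ : Finset (Fin n))}, A i ↑j * x j|
              ≤ ∑ j : {y // y ∈ (Sᶜ : Finset (Fin n))}, |A i ↑j * x j| :=
                Finset.abs_sum_le_sum_abs _ _
            _ = ∑ j : {y // y ∈ (Sᶜ : Finset (Fin n))}, A i ↑j * |x j| :=
                Finset.sum_congr rfl fun j _ => by
                  rw [abs_mul, abs_of_nonneg (hA_nonneg i ↑j)]
        have h4 : ρ * w i ≤ |ρ * x ⟨i, hi⟩| := by
          rw [hwval ⟨i, hi⟩, abs_mul]
          exact mul_le_mul_of_nonneg_right (le_abs_self ρ) (abs_nonneg _)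
        calc ρ * w i ≤ |ρ * x ⟨i, hi⟩| := h4
          _ ≤ ∑ j : {y // y ∈ (Sᶜ : Finset (Fin n))}, A i ↑j * |x j| := h3
          _ = ∑ j ∈ (Sᶜ : Finset (Fin n)), A i j * w j := h2.symm
          _ ≤ (A *ᵥ w) i := h1
      · rw [hw0 i hi, mul_zero, hAw]
        exact Finset.sum_nonneg fun j _ => mul_nonneg (hA_nonneg i j) (hwnn j)
    have hwa : w a = 0 := hw0 a (fun h => (Finset.mem_compl.mp h) ha)
    have hall := subinv_zero hA_nonneg hA_irred hv_pos heig w hwnn hge hwa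
    apply hx0
    funext j
    have hj := hall ↑j
    rw [hwval j] at hj
    exact abs_eq_zero.mp hj
  have hUdet : IsUnit (subm A Sᶜ Sᶜ - ρ • 1).det :=
    (Matrix.isUnit_iff_isUnit_det _).mp hU
  -- Step 2: vS is an eigenvector of red at ρ
  set vS : {y // y ∈ S} → ℝ := fun j => v ↑j with hvSdef
  set vC : {y // y ∈ (Sᶜ : Finset (Fin n))} → ℝ := fun j => v ↑j with hvCdef
  have hv1 : subm A S S *ᵥ vS + subm A S Sᶜ *ᵥ vC = ρ • vS := by
    funext i
    have h := hblockS A S vS vC v (fun j => rfl) (fun j => rfl) i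
    simp only [Pi.add_apply, Pi.smul_apply, smul_eq_mul]
    rw [← h, heig ↑i]
  have hv2 : subm A Sᶜ S *ᵥ vS + subm A Sᶜ Sᶜ *ᵥ vC = ρ • vC := by
    funext i
    have h := hblockC A S vS vC v (fun j => rfl) (fun j => rfl) i
    simp only [Pi.add_apply, Pi.smul_apply, smul_eq_mul]
    rw [← h, heig ↑i]
  have hMvC : (subm A Sᶜ Sᶜ - ρ • 1) *ᵥ vC = -(subm A Sᶜ S *ᵥ vS) := by
    rw [Matrix.sub_mulVec, Matrix.smul_mulVec, Matrix.one_mulVec]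
    funext i
    have h2 := congrFun hv2 i
    simp only [Pi.add_apply, Pi.smul_apply, smul_eq_mul, Pi.sub_apply, Pi.neg_apply] at h2 ⊢
    linarith
  have hvC : vC = -((subm A Sᶜ Sᶜ - ρ • 1)⁻¹ *ᵥ (subm A Sᶜ S *ᵥ vS)) := by
    calc vC = 1 *ᵥ vC := (Matrix.one_mulVec vC).symm
      _ = ((subm A Sᶜ Sᶜ - ρ • 1)⁻¹ * (subm A Sᶜ Sᶜ - ρ • 1)) *ᵥ vC := by
          rw [Matrix.nonsing_inv_mul _ hUdet]
      _ = (subm A Sᶜ Sᶜ - ρ • 1)⁻¹ *ᵥ ((subm A Sᶜ Sᶜ - ρ • 1) *ᵥ vC) :=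
          (Matrix.mulVec_mulVec _ _ _).symm
      _ = -((subm A Sᶜ Sᶜ - ρ • 1)⁻¹ *ᵥ (subm A Sᶜ S *ᵥ vS)) := by
          rw [hMvC, Matrix.mulVec_neg]
  have hredv : red A S ρ *ᵥ vS = ρ • vS := by
    rw [red, Matrix.sub_mulVec, ← Matrix.mulVec_mulVec, ← Matrix.mulVec_mulVec]
    rw [show (subm A Sᶜ Sᶜ - ρ • 1)⁻¹ *ᵥ (subm A Sᶜ S *ᵥ vS) = -vC from by
      rw [hvC]; simp]
    rw [Matrix.mulVec_neg, sub_neg_eq_add, hv1]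
  -- Step 3: u := vS ∘ φ⁻¹ is an eigenvector of red at ρ
  set u : {y // y ∈ S} → ℝ := fun i => vS (φ⁻¹ i) with hudef
  have hAuto := h_auto ρ hU
  have hredu : red A S ρ *ᵥ u = ρ • u := by
    funext i
    have h1 : (red A S ρ *ᵥ u) i = ∑ j : {y // y ∈ S}, red A S ρ i j * u j := rfl
    rw [h1, ← Equiv.sum_comp φ (fun j => red A S ρ i j * u j)]
    have h2 : ∀ j : {y // y ∈ S},
        red A S ρ i (φ j) * u (φ j) = red A S ρ (φ⁻¹ i) j * vS j := by
      intro j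
      have e1 : red A S ρ i (φ j) = red A S ρ (φ⁻¹ i) j := by
        conv_lhs => rw [show i = φ (φ⁻¹ i) from (Equiv.apply_symm_apply φ i).symm]
        exact (hAuto (φ⁻¹ i) j).symm
      have e2 : u (φ j) = vS j := by rw [hudef]; simp
      rw [e1, e2]
    rw [Finset.sum_congr rfl (fun j _ => h2 j)]
    have h3 : ∑ j : {y // y ∈ S}, red A S ρ (φ⁻¹ i) j * vS j
        = (red A S ρ *ᵥ vS) (φ⁻¹ i) := rfl
    rw [h3, hredv]
    simp [hudef]
  -- Step 4: extend u to a full eigenvector g of A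
  set uc : {y // y ∈ (Sᶜ : Finset (Fin n))} → ℝ :=
    -((subm A Sᶜ Sᶜ - ρ • 1)⁻¹ *ᵥ (subm A Sᶜ S *ᵥ u)) with hucdef
  have hu1 : subm A S S *ᵥ u + subm A S Sᶜ *ᵥ uc = ρ • u := by
    have hstep : subm A S Sᶜ *ᵥ uc
        = -((subm A S Sᶜ * (subm A Sᶜ Sᶜ - ρ • 1)⁻¹ * subm A Sᶜ S) *ᵥ u) := by
      rw [hucdef, Matrix.mulVec_neg, Matrix.mulVec_mulVec, Matrix.mulVec_mulVec,
        Matrix.mul_assoc]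
    rw [hstep, ← hredu, red, Matrix.sub_mulVec]
    abel
  have hMuc : (subm A Sᶜ Sᶜ - ρ • 1) *ᵥ uc = -(subm A Sᶜ S *ᵥ u) := by
    rw [hucdef, Matrix.mulVec_neg, Matrix.mulVec_mulVec,
      Matrix.mul_nonsing_inv _ hUdet, Matrix.one_mulVec]
  have hu2 : subm A Sᶜ S *ᵥ u + subm A Sᶜ Sᶜ *ᵥ uc = ρ • uc := by
    have hstep : subm A Sᶜ Sᶜ *ᵥ uc = (subm A Sᶜ Sᶜ - ρ • 1) *ᵥ uc + ρ • uc := by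
      rw [Matrix.sub_mulVec, Matrix.smul_mulVec, Matrix.one_mulVec]
      abel
    rw [hstep, hMuc]
    abel
  set g : Fin n → ℝ :=
    fun j => if h : j ∈ S then u ⟨j, h⟩ else uc ⟨j, Finset.mem_compl.mpr h⟩ with hgdef
  have hgS : ∀ j : {y // y ∈ S}, g ↑j = u j := fun j => dif_pos j.2
  have hgC : ∀ j : {y // y ∈ (Sᶜ : Finset (Fin n))}, g ↑j = uc j :=
    fun j => dif_neg (Finset.mem_compl.mp j.2)
  have hgeig : ∀ i, (A *ᵥ g) i = ρ * g i := by
    intro i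
    by_cases hi : i ∈ S
    · have h := hblockS A S u uc g hgS hgC ⟨i, hi⟩
      have h2 := congrFun hu1 ⟨i, hi⟩
      simp only [Pi.add_apply, Pi.smul_apply, smul_eq_mul] at h2
      have h3 : g i = u ⟨i, hi⟩ := hgS ⟨i, hi⟩
      rw [show (A *ᵥ g) i = (A *ᵥ g) ↑(⟨i, hi⟩ : {y // y ∈ S}) from rfl, h, h2, h3]
    · have hic : i ∈ (Sᶜ : Finset (Fin n)) := Finset.mem_compl.mpr hi
      have h := hblockC A S u uc g hgS hgC ⟨i, hic⟩
      have h2 := congrFun hu2 ⟨i, hic⟩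
      simp only [Pi.add_apply, Pi.smul_apply, smul_eq_mul] at h2
      have h3 : g i = uc ⟨i, hic⟩ := hgC ⟨i, hic⟩
      rw [show (A *ᵥ g) i = (A *ᵥ g) ↑(⟨i, hic⟩ : {y // y ∈ (Sᶜ : Finset (Fin n))}) from rfl,
        h, h2, h3]
  -- Step 5: g is proportional to v, with factor 1
  obtain ⟨t, htg⟩ := eig_unique hA_nonneg hA_irred hv_pos heig g hgeig a
  have hsum1 : ∑ i : {y // y ∈ S}, u i = ∑ i : {y // y ∈ S}, vS i :=
    Equiv.sum_comp (φ⁻¹ : Equiv.Perm {y // y ∈ S}) vS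
  have hsum2 : ∑ i : {y // y ∈ S}, u i = t * ∑ i : {y // y ∈ S}, vS i := by
    rw [Finset.mul_sum]
    refine Finset.sum_congr rfl fun i _ => ?_
    have h := htg ↑i
    rw [hgS i] at h
    exact h
  have hpos : 0 < ∑ i : {y // y ∈ S}, vS i :=
    Finset.sum_pos (fun i _ => hv_pos ↑i) ⟨⟨a, ha⟩, Finset.mem_univ _⟩
  have ht1 : t = 1 := by
    have h : t * (∑ i : {y // y ∈ S}, vS i) = 1 * ∑ i : {y // y ∈ S}, vS i := by
      rw [one_mul, ← hsum2, hsum1]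
    exact mul_right_cancel₀ (ne_of_gt hpos) h
  have hφinv : φ⁻¹ ⟨b, hb⟩ = ⟨a, ha⟩ := by
    rw [← hφab]; exact Equiv.symm_apply_apply φ _
  have hfin : u ⟨b, hb⟩ = v a := by
    rw [hudef]; dsimp only; rw [hφinv]
  have hgb : g b = u ⟨b, hb⟩ := hgS ⟨b, hb⟩
  have := htg b
  rw [hgb, hfin, ht1, one_mul] at this
  exact this
end

section
/- For a nonnegative irreducible matrix A with spectral radius ρ and any nonempty proper index subset S, the matrix (ρI − A_{S̄S̄}) is invertible and its inverse is entrywise nonnegative. -/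
open Matrix

open Filter Topology ENNReal

section gelfand
variable {n : ℕ}

attribute [local instance] Matrix.linftyOpNormedRing Matrix.linftyOpNormedAlgebra

lemma entry_norm_le {m : Type*} [Fintype m] [DecidableEq m] (M : Matrix m m ℂ) (i j : m) :
    ‖M i j‖ ≤ ‖M‖ := by
  have h1 : ‖M i j‖₊ ≤ ∑ j' : m, ‖M i j'‖₊ :=
    Finset.single_le_sum (f := fun j' => ‖M i j'‖₊) (fun _ _ => zero_le) (Finset.mem_univ j)
  have h2 : (∑ j' : m, ‖M i j'‖₊) ≤ Finset.univ.sup fun i : m => ∑ j' : m, ‖M i j'‖₊ :=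
    Finset.le_sup (f := fun i : m => ∑ j' : m, ‖M i j'‖₊) (Finset.mem_univ i)
  have := h1.trans h2
  rw [linfty_opNorm_def]
  exact_mod_cast this

lemma map_ofReal_pow (A : Matrix (Fin n) (Fin n) ℝ) (k : ℕ) :
    (A.map Complex.ofReal) ^ k = (A ^ k).map Complex.ofReal := by
  induction k with
  | zero =>
    ext i j
    simp [Matrix.map_apply, Matrix.one_apply]
    split <;> simp
  | succ k ih =>
    rw [pow_succ, pow_succ, ih]
    ext i j
    simp [Matrix.mul_apply, Matrix.map_apply]

variable [Nonempty (Fin n)]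

lemma spectrum_stuff (A : Matrix (Fin n) (Fin n) ℝ) :
    spectralRadius ℂ (A.map Complex.ofReal) = ENNReal.ofReal (specRad A) ∧ 0 ≤ specRad A := by
  set Aℂ := A.map Complex.ofReal
  have hne : (spectrum ℂ Aℂ).Nonempty := spectrum.nonempty Aℂ
  have hcmp : IsCompact (spectrum ℂ Aℂ) := spectrum.isCompact Aℂ
  have hKcmp : IsCompact ((fun z : ℂ => ‖z‖) '' spectrum ℂ Aℂ) :=
    hcmp.image continuous_norm
  have hKne : ((fun z : ℂ => ‖z‖) '' spectrum ℂ Aℂ).Nonempty := hne.image _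
  have hmem : specRad A ∈ (fun z : ℂ => ‖z‖) '' spectrum ℂ Aℂ := hKcmp.sSup_mem hKne
  obtain ⟨z0, hz0, hz0e⟩ := hmem
  have hub : ∀ z ∈ spectrum ℂ Aℂ, ‖z‖ ≤ specRad A := fun z hz =>
    le_csSup hKcmp.bddAbove ⟨z, hz, rfl⟩
  have h0 : 0 ≤ specRad A := by rw [← hz0e]; exact norm_nonneg z0
  refine ⟨le_antisymm ?_ ?_, h0⟩
  · refine iSup₂_le fun z hz => ?_
    have h : ((‖z‖₊ : NNReal) : ENNReal) = ENNReal.ofReal ‖z‖ := by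
      exact (ofReal_norm z).symm
    rw [h]
    exact ENNReal.ofReal_le_ofReal (hub z hz)
  · have h : ENNReal.ofReal (specRad A) = ((‖z0‖₊ : NNReal) : ENNReal) := by
      rw [← hz0e]; exact ofReal_norm z0
    rw [h]
    exact le_iSup₂ (f := fun k (_ : k ∈ spectrum ℂ Aℂ) => ((‖k‖₊ : NNReal) : ENNReal)) z0 hz0

lemma gelfand_bound (A : Matrix (Fin n) (Fin n) ℝ) {ε : ℝ} (hε : 0 < ε) :
    ∃ C > 0, ∀ k, ∀ i j, |(A ^ k) i j| ≤ C * (specRad A + ε) ^ k := by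
  obtain ⟨hsr, h0⟩ := spectrum_stuff A
  set Aℂ := A.map Complex.ofReal with hAc
  set ρ := specRad A
  have htends := spectrum.pow_norm_pow_one_div_tendsto_nhds_spectralRadius Aℂ
  rw [hsr] at htends
  -- convert to real limit
  have htreal : Tendsto (fun k : ℕ => ‖Aℂ ^ k‖ ^ (1 / (k:ℝ))) atTop (𝓝 ρ) := by
    have hcont := (ENNReal.tendsto_toReal (a := ENNReal.ofReal ρ) ENNReal.ofReal_ne_top).comp htends
    have : (fun k : ℕ => (ENNReal.ofReal (‖Aℂ ^ k‖ ^ (1 / (k:ℝ)))).toReal)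
        = fun k : ℕ => ‖Aℂ ^ k‖ ^ (1 / (k:ℝ)) := by
      funext k
      exact ENNReal.toReal_ofReal (Real.rpow_nonneg (norm_nonneg _) _)
    rw [ENNReal.toReal_ofReal h0] at hcont
    exact this ▸ hcont
  have hev : ∀ᶠ k : ℕ in atTop, ‖Aℂ ^ k‖ ^ (1 / (k:ℝ)) < ρ + ε :=
    htreal.eventually_lt_const (by linarith)
  obtain ⟨K, hK⟩ := (hev.and (eventually_ge_atTop 1)).exists_forall_of_atTop
  -- for k ≥ K : ‖Aℂ ^ k‖ ≤ (ρ+ε)^k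
  have hbig : ∀ k ≥ K, ‖Aℂ ^ k‖ ≤ (ρ + ε) ^ k := by
    intro k hk
    obtain ⟨h1, h2⟩ := hK k hk
    have hkne : (k:ℝ) ≠ 0 := Nat.cast_ne_zero.mpr (by omega)
    have heq : ((‖Aℂ ^ k‖ ^ (1 / (k:ℝ))) : ℝ) ^ (k:ℕ) = ‖Aℂ ^ k‖ := by
      rw [← Real.rpow_natCast (‖Aℂ ^ k‖ ^ (1 / (k:ℝ))) k, ← Real.rpow_mul (norm_nonneg _),
        one_div_mul_cancel hkne, Real.rpow_one]
    calc ‖Aℂ ^ k‖ = ((‖Aℂ ^ k‖ ^ (1 / (k:ℝ))) : ℝ) ^ (k:ℕ) := heq.symm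
      _ ≤ (ρ + ε) ^ k := pow_le_pow_left₀ (Real.rpow_nonneg (norm_nonneg _) _) h1.le k
  have hentry : ∀ k (i j : Fin n), |(A ^ k) i j| ≤ ‖Aℂ ^ k‖ := by
    intro k i j
    have : (Aℂ ^ k) i j = Complex.ofReal ((A ^ k) i j) := by
      rw [map_ofReal_pow]; rfl
    have h := entry_norm_le (Aℂ ^ k) i j
    rwa [this, Complex.norm_real, Real.norm_eq_abs] at h
  refine ⟨1 + ∑ k ∈ Finset.range K, ‖Aℂ ^ k‖ / (ρ + ε) ^ k, by positivity, ?_⟩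
  intro k i j
  have hpow : (0:ℝ) < (ρ + ε) ^ k := by positivity
  rcases le_or_gt K k with h | h
  · calc |(A ^ k) i j| ≤ ‖Aℂ ^ k‖ := hentry k i j
      _ ≤ (ρ + ε) ^ k := hbig k h
      _ = 1 * (ρ + ε) ^ k := (one_mul _).symm
      _ ≤ (1 + ∑ k ∈ Finset.range K, ‖Aℂ ^ k‖ / (ρ + ε) ^ k) * (ρ + ε) ^ k := by
          apply mul_le_mul_of_nonneg_right _ hpow.le
          have : (0:ℝ) ≤ ∑ k ∈ Finset.range K, ‖Aℂ ^ k‖ / (ρ + ε) ^ k := by positivity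
          linarith
  · have hterm : ‖Aℂ ^ k‖ / (ρ + ε) ^ k ≤ ∑ k ∈ Finset.range K, ‖Aℂ ^ k‖ / (ρ + ε) ^ k :=
      Finset.single_le_sum (f := fun k => ‖Aℂ ^ k‖ / (ρ + ε) ^ k)
        (fun _ _ => by positivity) (Finset.mem_range.mpr h)
    calc |(A ^ k) i j| ≤ ‖Aℂ ^ k‖ := hentry k i j
      _ = (‖Aℂ ^ k‖ / (ρ + ε) ^ k) * (ρ + ε) ^ k := by field_simp
      _ ≤ (1 + ∑ k ∈ Finset.range K, ‖Aℂ ^ k‖ / (ρ + ε) ^ k) * (ρ + ε) ^ k := by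
          apply mul_le_mul_of_nonneg_right _ hpow.le
          linarith

end gelfand


section realpow
variable {n : ℕ} {A : Matrix (Fin n) (Fin n) ℝ}

lemma pow_entry_nonneg (hA : ∀ i j, 0 ≤ A i j) : ∀ k i j, 0 ≤ (A ^ k) i j := by
  intro k
  induction k with
  | zero => intro i j; rw [pow_zero]; by_cases h : i = j <;> simp [Matrix.one_apply, h]
  | succ k ih =>
    intro i j
    rw [pow_succ, Matrix.mul_apply]
    exact Finset.sum_nonneg fun l _ => mul_nonneg (ih i l) (hA l j)

lemma pow_add_entry_ge (hA : ∀ i j, 0 ≤ A i j) (a b : ℕ) (i l j : Fin n) :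
    (A ^ a) i l * (A ^ b) l j ≤ (A ^ (a + b)) i j := by
  rw [pow_add, Matrix.mul_apply]
  have : ∀ c ∈ Finset.univ, (0:ℝ) ≤ (A ^ a) i c * (A ^ b) c j :=
    fun c _ => mul_nonneg (pow_entry_nonneg hA a i c) (pow_entry_nonneg hA b c j)
  exact Finset.single_le_sum this (Finset.mem_univ l)

lemma transGen_pow_pos (hA : ∀ i j, 0 ≤ A i j) {i j : Fin n}
    (h : Relation.TransGen (fun a b => 0 < A a b) i j) :
    ∃ c, 1 ≤ c ∧ 0 < (A ^ c) i j := by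
  induction h with
  | single h => exact ⟨1, le_refl 1, by rwa [pow_one]⟩
  | tail _ h ih =>
    obtain ⟨c, hc1, hc⟩ := ih
    refine ⟨c + 1, by omega, ?_⟩
    calc (0:ℝ) < (A ^ c) i _ * (A ^ 1) _ _ := by rw [pow_one]; exact mul_pos hc h
      _ ≤ (A ^ (c + 1)) i _ := pow_add_entry_ge hA c 1 _ _ _

end realpow

section lower
variable {n : ℕ} {A : Matrix (Fin n) (Fin n) ℝ}

lemma ratio_bounded {C w v : ℝ} (hv : 0 < v) (hwv : v < w) (h : ∀ m : ℕ, w ^ m ≤ C * v ^ m) :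
    False := by
  have hr : 1 < w / v := (one_lt_div hv).mpr hwv
  obtain ⟨m, hm⟩ := pow_unbounded_of_one_lt C hr
  have h2 := h m
  rw [div_pow] at hm
  have hvpow : (0:ℝ) < v ^ m := by positivity
  rw [lt_div_iff₀ hvpow] at hm
  linarith

lemma diag_pow_le (hA : ∀ i j, 0 ≤ A i j) (c : ℕ) (i : Fin n)
    (hb : ∀ ε : ℝ, 0 < ε → ∃ C > 0, ∀ k, ∀ i j, |(A ^ k) i j| ≤ C * (specRad A + ε) ^ k)
    (h0 : 0 ≤ specRad A) :
    (A ^ c) i i ≤ specRad A ^ c := by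
  set ρ := specRad A
  set w := (A ^ c) i i with hw
  rcases le_or_gt w 0 with hw0 | hw0
  · exact hw0.trans (by positivity)
  have hpows : ∀ m : ℕ, w ^ m ≤ (A ^ (c * m)) i i := by
    intro m
    induction m with
    | zero => simp [Matrix.one_apply]
    | succ m ih =>
      calc w ^ (m+1) = w ^ m * w := pow_succ w m
        _ ≤ (A ^ (c * m)) i i * (A ^ c) i i := by
            apply mul_le_mul ih (le_refl w) hw0.le (pow_entry_nonneg hA _ i i)
        _ ≤ (A ^ (c * m + c)) i i := pow_add_entry_ge hA _ _ i i i
        _ = (A ^ (c * (m+1))) i i := by ring_nf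
  have key : ∀ ε : ℝ, 0 < ε → w ≤ (ρ + ε) ^ c := by
    intro ε hε
    obtain ⟨C, hC, hCb⟩ := hb ε hε
    by_contra hcon
    push_neg at hcon
    refine ratio_bounded (C := C) (v := (ρ + ε) ^ c) (by positivity) hcon fun m => ?_
    calc w ^ m ≤ (A ^ (c * m)) i i := hpows m
      _ ≤ |(A ^ (c * m)) i i| := le_abs_self _
      _ ≤ C * (ρ + ε) ^ (c * m) := hCb (c * m) i i
      _ = C * ((ρ + ε) ^ c) ^ m := by rw [pow_mul]
  by_contra hcon
  push_neg at hcon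
  have htend : Tendsto (fun e : ℝ => (ρ + e) ^ c) (𝓝 0) (𝓝 (ρ ^ c)) := by
    have : Continuous (fun e : ℝ => (ρ + e) ^ c) := by continuity
    have ht := this.tendsto 0
    simpa using ht
  have hev : ∀ᶠ e : ℝ in 𝓝 0, (ρ + e) ^ c < w := htend.eventually_lt_const hcon
  obtain ⟨ε, hε1, hε2⟩ := (eventually_nhdsWithin_of_eventually_nhds (s := Set.Ioi (0:ℝ))
    hev).and self_mem_nhdsWithin |>.exists
  exact absurd (key ε hε2) (not_le.mpr hε1)

end lower

section neumann
variable {m : Type*} [Fintype m] [DecidableEq m]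

lemma neumann (B : Matrix m m ℝ) {t : ℝ} (ht : 0 < t)
    (hsum : ∀ i j, Summable fun k : ℕ => (B ^ k) i j / t ^ (k + 1)) :
    (t • (1 : Matrix m m ℝ) - B) *
      (Matrix.of fun i j => ∑' k : ℕ, (B ^ k) i j / t ^ (k + 1)) = 1 := by
  have htne : t ≠ 0 := ht.ne'
  set Cm : Matrix m m ℝ := Matrix.of fun i j => ∑' k : ℕ, (B ^ k) i j / t ^ (k + 1) with hCm
  ext i j
  set F : ℕ → ℝ := fun k => (B ^ k) i j / t ^ k with hF
  have hFsum : Summable F := by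
    have : F = fun k => t * ((B ^ k) i j / t ^ (k + 1)) := by
      funext k
      rw [hF, pow_succ]
      field_simp
    rw [this]
    exact (hsum i j).mul_left t
  have hsum_shift : Summable fun k : ℕ => (B ^ (k + 1)) i j / t ^ (k + 1) := by
    have := hFsum.comp_injective (add_left_injective 1)
    exact this
  have h1 : (∑ l, (t • (1 : Matrix m m ℝ) - B) i l * Cm l j)
      = t * Cm i j - ∑ l, B i l * Cm l j := by
    have : ∀ l, (t • (1 : Matrix m m ℝ) - B) i l * Cm l j
        = t * ((1 : Matrix m m ℝ) i l * Cm l j) - B i l * Cm l j := by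
      intro l
      simp [Matrix.sub_apply, Matrix.smul_apply, smul_eq_mul]
      ring
    rw [Finset.sum_congr rfl fun l _ => this l, Finset.sum_sub_distrib, ← Finset.mul_sum]
    congr 2
    rw [Finset.sum_eq_single i]
    · simp [Matrix.one_apply]
    · intro l _ hl
      simp [Matrix.one_apply, Ne.symm hl]
    · intro h
      exact absurd (Finset.mem_univ i) h
  have h2 : ∑ l, B i l * Cm l j = ∑' k : ℕ, (B ^ (k + 1)) i j / t ^ (k + 1) := by
    have hrw : ∀ l, B i l * Cm l j = ∑' k : ℕ, B i l * ((B ^ k) l j / t ^ (k + 1)) := by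
      intro l
      rw [hCm]
      exact ((hsum l j).tsum_mul_left (B i l)).symm
    rw [Finset.sum_congr rfl fun l _ => hrw l]
    rw [← Summable.tsum_finsetSum fun l _ => ((hsum l j).mul_left (B i l))]
    congr 1
    funext k
    rw [pow_succ' B k, Matrix.mul_apply, Finset.sum_div]
    exact Finset.sum_congr rfl fun l _ => by ring
  have h3 : t * Cm i j = ∑' k, F k := by
    rw [hCm]
    simp only [Matrix.of_apply]
    rw [← (hsum i j).tsum_mul_left t]
    congr 1
    funext k
    rw [hF, pow_succ]
    field_simp
  have h4 : (∑' k : ℕ, (B ^ (k + 1)) i j / t ^ (k + 1)) = (∑' k, F k) - F 0 := by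
    have := Summable.tsum_eq_zero_add hFsum
    have hfe : (fun k : ℕ => F (k + 1)) = fun k : ℕ => (B ^ (k + 1)) i j / t ^ (k + 1) := rfl
    rw [this, hfe]
    ring
  rw [Matrix.mul_apply, h1, h2, h3, h4]
  have : F 0 = (1 : Matrix m m ℝ) i j := by
    simp [hF]
  rw [this]
  ring

end neumann

section comb
variable {ι : Type*} [Fintype ι] [DecidableEq ι]

lemma pow_nonneg' {Q : Matrix ι ι ℝ} (hQ : ∀ i j, 0 ≤ Q i j) : ∀ k i j, 0 ≤ (Q ^ k) i j := by
  intro k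
  induction k with
  | zero => intro i j; rw [pow_zero]; by_cases h : i = j <;> simp [Matrix.one_apply, h]
  | succ k ih =>
    intro i j
    rw [pow_succ, Matrix.mul_apply]
    exact Finset.sum_nonneg fun l _ => mul_nonneg (ih i l) (hQ l j)

lemma rowsum_mul (P Q : Matrix ι ι ℝ) (i : ι) :
    ∑ j, (P * Q) i j = ∑ c, P i c * ∑ j, Q c j := by
  simp only [Matrix.mul_apply]
  rw [Finset.sum_comm]
  exact Finset.sum_congr rfl fun c _ => by rw [Finset.mul_sum]

lemma rowsum_pow_le_one {Q : Matrix ι ι ℝ} (hQ0 : ∀ i j, 0 ≤ Q i j)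
    (hQrow : ∀ i, ∑ j, Q i j ≤ 1) : ∀ m i, ∑ j, (Q ^ m) i j ≤ 1 := by
  intro m
  induction m with
  | zero => intro i; simp [Matrix.one_apply]
  | succ m ih =>
    intro i
    rw [pow_succ', rowsum_mul]
    calc ∑ c, Q i c * ∑ j, (Q ^ m) c j ≤ ∑ c, Q i c * 1 :=
          Finset.sum_le_sum fun c _ => mul_le_mul_of_nonneg_left (ih c) (hQ0 i c)
      _ = ∑ c, Q i c := by simp
      _ ≤ 1 := hQrow i

lemma pow_le_pow_entry {P Q : Matrix ι ι ℝ} (hP0 : ∀ i j, 0 ≤ P i j)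
    (hPQ : ∀ i j, P i j ≤ Q i j) : ∀ m i j, (P ^ m) i j ≤ (Q ^ m) i j := by
  intro m
  induction m with
  | zero => intro i j; exact le_refl _
  | succ m ih =>
    intro i j
    rw [pow_succ' P, pow_succ' Q, Matrix.mul_apply, Matrix.mul_apply]
    refine Finset.sum_le_sum fun c _ => ?_
    exact mul_le_mul (hPQ i c) (ih c j) (pow_nonneg' hP0 m c j)
      ((hP0 i c).trans (hPQ i c))

lemma rowsum_pow_div {P : Matrix ι ι ℝ} (hP0 : ∀ i j, 0 ≤ P i j) {θ : ℝ}
    (hθ0 : 0 ≤ θ) {N : ℕ} (hN : 1 ≤ N)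
    (hPN : ∀ i, ∑ j, (P ^ N) i j ≤ θ) (hP1 : ∀ m i, ∑ j, (P ^ m) i j ≤ 1) :
    ∀ m i, ∑ j, (P ^ m) i j ≤ θ ^ (m / N) := by
  intro m
  induction m using Nat.strong_induction_on with
  | _ m ih =>
    rcases lt_or_ge m N with h | h
    · rw [Nat.div_eq_of_lt h, pow_zero]
      exact hP1 m
    · intro i
      obtain ⟨m', rfl⟩ : ∃ m', m = m' + N := ⟨m - N, by omega⟩
      rw [pow_add, rowsum_mul]
      have hdiv : (m' + N) / N = m' / N + 1 := Nat.add_div_right m' (by omega)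
      rw [hdiv, pow_succ]
      calc ∑ c, (P ^ m') i c * ∑ j, (P ^ N) c j
          ≤ ∑ c, (P ^ m') i c * θ := by
            refine Finset.sum_le_sum fun c _ => ?_
            exact mul_le_mul_of_nonneg_left (hPN c) (pow_nonneg' hP0 m' i c)
        _ = (∑ c, (P ^ m') i c) * θ := by rw [← Finset.sum_mul]
        _ ≤ θ ^ (m' / N) * θ := by
            apply mul_le_mul_of_nonneg_right _ hθ0
            exact ih m' (by omega) i

end comb

section reach
variable {n : ℕ}

def ReachSet (A : Matrix (Fin n) (Fin n) ℝ) (S : Finset (Fin n)) : ℕ → Fin n → Prop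
  | 0, i => i ∈ S
  | (m+1), i => i ∈ S ∨ ∃ b, 0 < A i b ∧ ReachSet A S m b

variable {A : Matrix (Fin n) (Fin n) ℝ} {S : Finset (Fin n)}

lemma reach_succ : ∀ m i, ReachSet A S m i → ReachSet A S (m + 1) i := by
  intro m
  induction m with
  | zero => intro i h; exact Or.inl h
  | succ m ih =>
    intro i h
    rcases h with h | ⟨b, hb, hr⟩
    · exact Or.inl h
    · exact Or.inr ⟨b, hb, ih b hr⟩

lemma reach_mono {m M : ℕ} (h : m ≤ M) {i : Fin n} (hr : ReachSet A S m i) :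
    ReachSet A S M i := by
  induction M, h using Nat.le_induction with
  | base => exact hr
  | succ M _ ih => exact reach_succ M i ih

lemma reach_exists (hirr : ∀ i j, Relation.TransGen (fun a b => 0 < A a b) i j)
    {s : Fin n} (hs : s ∈ S) (i : Fin n) : ∃ m, ReachSet A S m i := by
  have h : Relation.TransGen (fun a b => 0 < A a b) i s := hirr i s
  induction h using Relation.TransGen.head_induction_on with
  | single h => exact ⟨1, Or.inr ⟨s, h, hs⟩⟩
  | head h _ ih' =>
    obtain ⟨m, hm⟩ := ih'
    exact ⟨m + 1, Or.inr ⟨_, h, hm⟩⟩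

lemma reach_univ (hirr : ∀ i j, Relation.TransGen (fun a b => 0 < A a b) i j)
    {s : Fin n} (hs : s ∈ S) : ∃ N, 1 ≤ N ∧ ∀ i, ReachSet A S N i := by
  have h := reach_exists hirr hs
  choose f hf using h
  refine ⟨(∑ i, f i) + 1, by omega, fun i => ?_⟩
  refine reach_mono ?_ (hf i)
  have : f i ≤ ∑ i, f i := Finset.single_le_sum (f := f) (fun _ _ => Nat.zero_le _)
    (Finset.mem_univ i)
  omega

lemma escape {P Q : Matrix (Fin n) (Fin n) ℝ} {q : ℝ}
    (hP0 : ∀ i j, 0 ≤ P i j) (hPQ : ∀ i j, P i j ≤ Q i j)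
    (hq : 0 < q) (hedge : ∀ i j, 0 < A i j → q ≤ Q i j)
    (hout : ∀ i, ∃ b, 0 < A i b)
    (hPzero : ∀ i j, i ∈ S ∨ j ∈ S → P i j = 0) :
    ∀ m i, ReachSet A S (m + 1) i →
      ∑ j, (P ^ (m + 1)) i j + q ^ (m + 1) ≤ ∑ j, (Q ^ (m + 1)) i j := by
  have hQ0 : ∀ i j, 0 ≤ Q i j := fun i j => (hP0 i j).trans (hPQ i j)
  -- lower bound for Q row sums
  have hQlow : ∀ m i, q ^ m ≤ ∑ j, (Q ^ m) i j := by
    intro m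
    induction m with
    | zero => intro i; simp [Matrix.one_apply]
    | succ m ih =>
      intro i
      obtain ⟨b, hb⟩ := hout i
      rw [pow_succ' Q, rowsum_mul]
      have hterm : q * q ^ m ≤ Q i b * ∑ j, (Q ^ m) b j := by
        apply mul_le_mul (hedge i b hb) (ih b) (by positivity) (hQ0 i b)
      calc q ^ (m + 1) = q * q ^ m := by ring
        _ ≤ Q i b * ∑ j, (Q ^ m) b j := hterm
        _ ≤ ∑ c, Q i c * ∑ j, (Q ^ m) c j := by
            refine Finset.single_le_sum (f := fun c => Q i c * ∑ j, (Q ^ m) c j) ?_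
              (Finset.mem_univ b)
            intro c _
            exact mul_nonneg (hQ0 i c) (Finset.sum_nonneg fun j _ => pow_nonneg' hQ0 m c j)
  intro m
  induction m with
  | zero =>
    intro i hreach
    rcases hreach with hiS | ⟨b, hb, hbS⟩
    · -- i ∈ S : P-row is zero
      have hrow : ∀ j, (P ^ 1) i j = 0 := fun j => by
        rw [pow_one]; exact hPzero i j (Or.inl hiS)
      simp only [Finset.sum_congr rfl fun j _ => hrow j, Finset.sum_const_zero, zero_add]
      exact hQlow 1 i
    · -- b ∈ S (ReachSet 0 b)
      have hPb : P i b = 0 := hPzero i b (Or.inr hbS)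
      rw [pow_one, pow_one, pow_one]
      have h1 : ∑ j, P i j ≤ (∑ j ∈ Finset.univ.erase b, Q i j) := by
        rw [← Finset.add_sum_erase _ (fun j => P i j) (Finset.mem_univ b), hPb, zero_add]
        exact Finset.sum_le_sum fun j _ => hPQ i j
      have h2 : (∑ j ∈ Finset.univ.erase b, Q i j) + Q i b = ∑ j, Q i j :=
        Finset.sum_erase_add _ _ (Finset.mem_univ b)
      have h3 : q ≤ Q i b := hedge i b hb
      linarith
  | succ m ih =>
    intro i hreach
    rcases hreach with hiS | ⟨b, hb, hbS⟩
    · have hrow : ∀ j, (P ^ (m + 2)) i j = 0 := by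
        intro j
        rw [pow_succ', Matrix.mul_apply]
        exact Finset.sum_eq_zero fun c _ => by rw [hPzero i c (Or.inl hiS), zero_mul]
      simp only [Finset.sum_congr rfl fun j _ => hrow j, Finset.sum_const_zero, zero_add]
      exact hQlow (m + 2) i
    · -- i ∉ S possibly, b has ReachSet (m+1) b
      have ihb := ih b hbS
      rw [pow_succ' P (m+1), pow_succ' Q (m+1), rowsum_mul, rowsum_mul]
      set sP : Fin n → ℝ := fun c => ∑ j, (P ^ (m+1)) c j with hsP
      set sQ : Fin n → ℝ := fun c => ∑ j, (Q ^ (m+1)) c j with hsQ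
      have hsP0 : ∀ c, 0 ≤ sP c := fun c =>
        Finset.sum_nonneg fun j _ => pow_nonneg' hP0 (m+1) c j
      have hsPQ : ∀ c, sP c ≤ sQ c := fun c =>
        Finset.sum_le_sum fun j _ => pow_le_pow_entry hP0 hPQ (m+1) c j
      have hgain : P i b * sP b + q ^ (m + 2) ≤ Q i b * sQ b := by
        have h3 : q ≤ Q i b := hedge i b hb
        have h4 : sP b + q ^ (m+1) ≤ sQ b := ihb
        calc P i b * sP b + q ^ (m + 2)
            ≤ Q i b * sP b + q * q ^ (m + 1) := by
              have := mul_le_mul_of_nonneg_right (hPQ i b) (hsP0 b)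
              have hpow : q ^ (m+2) = q * q ^ (m+1) := by ring
              linarith [hpow ▸ le_refl (q ^ (m+2))]
          _ ≤ Q i b * sP b + Q i b * q ^ (m+1) := by
              have : q * q ^ (m+1) ≤ Q i b * q ^ (m+1) :=
                mul_le_mul_of_nonneg_right h3 (by positivity)
              linarith
          _ = Q i b * (sP b + q ^ (m+1)) := by ring
          _ ≤ Q i b * sQ b := mul_le_mul_of_nonneg_left h4 (hQ0 i b)
      have hrest : ∑ c ∈ Finset.univ.erase b, P i c * sP c
          ≤ ∑ c ∈ Finset.univ.erase b, Q i c * sQ c := by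
        refine Finset.sum_le_sum fun c _ => ?_
        exact mul_le_mul (hPQ i c) (hsPQ c) (hsP0 c) (hQ0 i c)
      have e1 : ∑ c, P i c * sP c = P i b * sP b + ∑ c ∈ Finset.univ.erase b, P i c * sP c :=
        (Finset.add_sum_erase _ _ (Finset.mem_univ b)).symm
      have e2 : ∑ c, Q i c * sQ c = Q i b * sQ b + ∑ c ∈ Finset.univ.erase b, Q i c * sQ c :=
        (Finset.add_sum_erase _ _ (Finset.mem_univ b)).symm
      rw [e1, e2]
      linarith

end reach

section chain
variable {n : ℕ} {A : Matrix (Fin n) (Fin n) ℝ}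

lemma chain_bound (hA : ∀ i j, 0 ≤ A i j) {T : ℝ} (hT : 0 < T) {i j : Fin n}
    (h : Relation.TransGen (fun a b => 0 < A a b) i j) :
    ∃ c > 0, ∀ x : Fin n → ℝ, (∀ a, 0 < x a) → (∀ a, ∑ b, A a b * x b ≤ T * x a) →
      x j ≤ c * x i := by
  have step : ∀ (a b : Fin n), 0 < A a b → ∀ x : Fin n → ℝ, (∀ a, 0 < x a) →
      (∀ a, ∑ b, A a b * x b ≤ T * x a) → x b ≤ (T / A a b) * x a := by
    intro a b hab x hx hAx
    have h1 : A a b * x b ≤ ∑ b', A a b' * x b' :=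
      Finset.single_le_sum (f := fun b' => A a b' * x b')
        (fun b' _ => mul_nonneg (hA a b') (hx b').le) (Finset.mem_univ b)
    have h2 := h1.trans (hAx a)
    rw [div_mul_eq_mul_div, le_div_iff₀ hab]
    linarith
  induction h with
  | @single b hb => exact ⟨T / A i b, by positivity, fun x hx hAx => step i b hb x hx hAx⟩
  | @tail b c hTG hedge ih =>
    obtain ⟨κ, hκ, hκb⟩ := ih
    refine ⟨(T / A b c) * κ, by positivity, fun x hx hAx => ?_⟩
    calc x c ≤ (T / A b c) * x b := step b c hedge x hx hAx
      _ ≤ (T / A b c) * (κ * x i) :=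
          mul_le_mul_of_nonneg_left (hκb x hx hAx) (by positivity)
      _ = (T / A b c) * κ * x i := by ring

lemma chain_bound_univ (hA : ∀ i j, 0 ≤ A i j) {T : ℝ} (hT : 0 < T)
    (hirr : ∀ i j, Relation.TransGen (fun a b => 0 < A a b) i j) [Nonempty (Fin n)] :
    ∃ κ > 0, ∀ x : Fin n → ℝ, (∀ a, 0 < x a) → (∀ a, ∑ b, A a b * x b ≤ T * x a) →
      ∀ i j, x j ≤ κ * x i := by
  have h : ∀ p : Fin n × Fin n, ∃ c > 0, ∀ x : Fin n → ℝ, (∀ a, 0 < x a) →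
      (∀ a, ∑ b, A a b * x b ≤ T * x a) → x p.2 ≤ c * x p.1 := fun p =>
    chain_bound hA hT (hirr p.1 p.2)
  choose c hc hcb using h
  refine ⟨∑ p, c p, Finset.sum_pos (fun p _ => hc p) Finset.univ_nonempty, ?_⟩
  intro x hx hAx i j
  have h1 := hcb (i, j) x hx hAx
  have h2 : c (i, j) ≤ ∑ p, c p :=
    Finset.single_le_sum (f := c) (fun p _ => (hc p).le) (Finset.mem_univ (i, j))
  calc x j ≤ c (i, j) * x i := h1
    _ ≤ (∑ p, c p) * x i := mul_le_mul_of_nonneg_right h2 (hx i).le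
end chain

section padded
variable {n : ℕ} (A : Matrix (Fin n) (Fin n) ℝ) (S : Finset (Fin n))

noncomputable def padded : Matrix (Fin n) (Fin n) ℝ :=
  Matrix.of fun a b => if a ∈ S ∨ b ∈ S then 0 else A a b

variable {A S}

lemma padded_le (hA : ∀ i j, 0 ≤ A i j) : ∀ a b, 0 ≤ padded A S a b ∧ padded A S a b ≤ A a b := by
  intro a b
  unfold padded
  simp only [Matrix.of_apply]
  split <;> simp [hA a b]

lemma padded_col_zero {l : Fin n} (hl : l ∈ S) (k : ℕ) {a : Fin n} (ha : a ∉ S) :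
    ((padded A S) ^ k) a l = 0 := by
  cases k with
  | zero =>
    rw [pow_zero]
    exact Matrix.one_apply_ne (fun h => ha (h ▸ hl))
  | succ k =>
    rw [pow_succ, Matrix.mul_apply]
    refine Finset.sum_eq_zero fun c _ => ?_
    have : padded A S c l = 0 := by unfold padded; simp [hl]
    rw [this, mul_zero]

lemma subm_pow (k : ℕ) (i j : ↥(Sᶜ : Finset (Fin n))) :
    ((subm A Sᶜ Sᶜ) ^ k) i j = ((padded A S) ^ k) i.1 j.1 := by
  induction k generalizing i j with
  | zero =>
    rw [pow_zero, pow_zero]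
    rcases eq_or_ne i j with h | h
    · subst h
      rw [Matrix.one_apply_eq, Matrix.one_apply_eq]
    · rw [Matrix.one_apply_ne h, Matrix.one_apply_ne (fun hc => h (Subtype.ext hc))]
  | succ k ih =>
    rw [pow_succ, pow_succ, Matrix.mul_apply, Matrix.mul_apply]
    have hstep : ∀ l : ↥(Sᶜ : Finset (Fin n)),
        ((subm A Sᶜ Sᶜ) ^ k) i l * subm A Sᶜ Sᶜ l j
          = ((padded A S) ^ k) i.1 l.1 * padded A S l.1 j.1 := by
      intro l
      rw [ih i l]
      congr 1
      unfold padded subm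
      have h1 : l.1 ∉ S := Finset.mem_compl.mp l.2
      have h2 : j.1 ∉ S := Finset.mem_compl.mp j.2
      simp [h1, h2]
    rw [Finset.sum_congr rfl fun l _ => hstep l]
    rw [Finset.sum_coe_sort (Sᶜ : Finset (Fin n))
      (fun c => ((padded A S) ^ k) i.1 c * padded A S c j.1)]
    refine Finset.sum_subset (Finset.subset_univ _) fun c _ hc => ?_
    have hcS : c ∈ S := by
      by_contra h
      exact hc (Finset.mem_compl.mpr h)
    have : padded A S c j.1 = 0 := by unfold padded; simp [hcS]
    rw [this, mul_zero]

end padded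

section scaled
variable {n : ℕ}

lemma scaled_pow {B : Matrix (Fin n) (Fin n) ℝ} {x : Fin n → ℝ} (hx : ∀ a, 0 < x a)
    {t : ℝ} (ht : 0 < t) :
    ∀ (m : ℕ) (a b : Fin n),
      ((Matrix.of fun a b => B a b * x b / (t * x a)) ^ m) a b
        = (B ^ m) a b * x b / (t ^ m * x a) := by
  intro m
  induction m with
  | zero =>
    intro a b
    rw [pow_zero, pow_zero]
    rcases eq_or_ne a b with h | h
    · subst h
      rw [Matrix.one_apply_eq]
      have := (hx a).ne'
      field_simp
    · rw [Matrix.one_apply_ne h]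
      simp
  | succ m ih =>
    intro a b
    rw [pow_succ, pow_succ, Matrix.mul_apply, Matrix.mul_apply]
    rw [Finset.sum_congr rfl fun c _ => by rw [ih a c]]
    rw [Finset.sum_mul, Finset.sum_div]
    refine Finset.sum_congr rfl fun c _ => ?_
    simp only [Matrix.of_apply]
    have hxc := (hx c).ne'
    have hxa := (hx a).ne'
    have htne := ht.ne'
    field_simp
    ring

lemma summable_geo_div {γ : ℝ} (hγ0 : 0 < γ) (hγ1 : γ < 1) {N : ℕ} (hN : 1 ≤ N) :
    Summable fun m : ℕ => γ ^ (m / N) := by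
  have hNR : (0:ℝ) < N := by exact_mod_cast hN
  have key : ∀ m : ℕ, γ ^ (m / N) ≤ γ⁻¹ * (γ ^ ((1:ℝ) / N)) ^ m := by
    intro m
    have hlt : (m:ℝ) / N - 1 ≤ ((m / N : ℕ) : ℝ) := by
      have h1 : m < N * (m / N) + N := by
        have h2 := Nat.div_add_mod m N
        have h3 := Nat.mod_lt m (show 0 < N by omega)
        omega
      have h4 : (m:ℝ) < N * ((m / N : ℕ) : ℝ) + N := by exact_mod_cast h1
      rw [div_sub_one hNR.ne', div_le_iff₀ hNR]
      nlinarith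
    have h5 : γ ^ ((m / N : ℕ) : ℝ) ≤ γ ^ ((m:ℝ) / N - 1) :=
      Real.rpow_le_rpow_of_exponent_ge hγ0 hγ1.le hlt
    rw [Real.rpow_natCast] at h5
    refine h5.trans (le_of_eq ?_)
    rw [Real.rpow_sub hγ0, Real.rpow_one, ← Real.rpow_natCast (γ ^ ((1:ℝ)/N)) m,
      ← Real.rpow_mul hγ0.le, show (1:ℝ)/N * m = (m:ℝ)/N by ring, div_eq_inv_mul]
  refine Summable.of_nonneg_of_le (fun m => by positivity) key ?_
  refine Summable.mul_left γ⁻¹ ?_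
  exact summable_geometric_of_lt_one (Real.rpow_nonneg hγ0.le _)
    (Real.rpow_lt_one hγ0.le hγ1 (by positivity))

end scaled


set_option maxHeartbeats 1600000 in
theorem rho_sub_principal_submatrix_inverse_nonneg
    {n : ℕ} (A : Matrix (Fin n) (Fin n) ℝ)
    (hA_nonneg : ∀ i j, 0 ≤ A i j) (hA_irred : Irred A)
    (S : Finset (Fin n)) (hS_nonempty : S.Nonempty) (hS_proper : S ≠ Finset.univ) :
    IsUnit (specRad A • (1 : Matrix (Sᶜ : Finset (Fin n)) (Sᶜ : Finset (Fin n)) ℝ)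
        - subm A Sᶜ Sᶜ) ∧
      ∀ i j, 0 ≤ (specRad A • (1 : Matrix (Sᶜ : Finset (Fin n)) (Sᶜ : Finset (Fin n)) ℝ)
        - subm A Sᶜ Sᶜ)⁻¹ i j := by
  classical
  obtain ⟨s0, hs0⟩ := hS_nonempty
  haveI : Nonempty (Fin n) := ⟨s0⟩
  obtain ⟨hsr, hρ0⟩ := spectrum_stuff A
  set ρ := specRad A with hρ
  have hb : ∀ ε : ℝ, 0 < ε → ∃ C > 0, ∀ k, ∀ i j, |(A ^ k) i j| ≤ C * (ρ + ε) ^ k :=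
    fun ε hε => gelfand_bound A hε
  -- ρ > 0
  have hρpos : 0 < ρ := by
    obtain ⟨c, hc1, hcpos⟩ := transGen_pow_pos hA_nonneg (hA_irred s0 s0)
    have hle := diag_pow_le hA_nonneg c s0 hb hρ0
    rw [← hρ] at hle
    by_contra hcon
    push_neg at hcon
    have : ρ = 0 := le_antisymm hcon hρ0
    rw [this, zero_pow (by omega)] at hle
    linarith
  -- out-edges
  have hout : ∀ i, ∃ b, 0 < A i b := by
    intro i
    obtain ⟨b, hab, -⟩ := Relation.TransGen.head'_iff.mp (hA_irred i i)
    exact ⟨b, hab⟩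
  -- minimum positive entry
  set E := Finset.univ.filter (fun p : Fin n × Fin n => 0 < A p.1 p.2) with hE
  have hEne : E.Nonempty := by
    obtain ⟨b, hb'⟩ := hout s0
    refine ⟨(s0, b), ?_⟩
    rw [hE]
    exact Finset.mem_filter.mpr ⟨Finset.mem_univ _, hb'⟩
  set pmin := E.inf' hEne (fun p => A p.1 p.2) with hpm
  have hpmin_pos : 0 < pmin := by
    rw [hpm, Finset.lt_inf'_iff]
    intro p hp
    exact (Finset.mem_filter.mp hp).2
  have hpmin_le : ∀ a b, 0 < A a b → pmin ≤ A a b := by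
    intro a b h
    have hmem : (a, b) ∈ E := by
      rw [hE]; exact Finset.mem_filter.mpr ⟨Finset.mem_univ _, h⟩
    exact Finset.inf'_le _ hmem
  -- the chain constant
  set T := ρ + 1 with hTdef
  have hT : 0 < T := by positivity
  obtain ⟨κ, hκ, hκb⟩ := chain_bound_univ hA_nonneg hT hA_irred
  set q := pmin / (κ * T) with hqdef
  have hq : 0 < q := by positivity
  obtain ⟨N, hN1, hNreach⟩ := reach_univ (A := A) hA_irred hs0
  set θ := max (1 - q ^ N) (1/2 : ℝ) with hθdef
  have hθ0 : (0:ℝ) ≤ θ := le_trans (by norm_num) (le_max_right _ _)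
  have hθlt : θ < 1 := by
    rw [hθdef, max_lt_iff]
    constructor
    · have : 0 < q ^ N := by positivity
      linarith
    · norm_num
  -- choose ε
  have hεex : ∃ ε : ℝ, 0 < ε ∧ ε < 1 ∧ ((ρ + ε)/ρ) ^ N * θ < 1 := by
    have hcont : Continuous (fun e : ℝ => ((ρ + e)/ρ) ^ N * θ) := by
      exact (((continuous_const.add continuous_id).div_const ρ).pow N).mul continuous_const
    have htend : Filter.Tendsto (fun e : ℝ => ((ρ + e)/ρ) ^ N * θ) (𝓝 0) (𝓝 θ) := by
      have := hcont.tendsto 0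
      simpa [div_self hρpos.ne'] using this
    have hev : ∀ᶠ e : ℝ in 𝓝 0, ((ρ + e)/ρ) ^ N * θ < 1 := htend.eventually_lt_const hθlt
    have hev2 : ∀ᶠ e : ℝ in 𝓝 (0:ℝ), e < 1 := by
      have hm := Iio_mem_nhds (show (0:ℝ) < 1 by norm_num)
      filter_upwards [hm] with e he using he
    obtain ⟨ε, h1, h2⟩ := ((eventually_nhdsWithin_of_eventually_nhds (s := Set.Ioi (0:ℝ))
      (hev.and hev2)).and self_mem_nhdsWithin).exists
    exact ⟨ε, h2, h1.2, h1.1⟩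
  obtain ⟨ε, hε, hε1, hγlt⟩ := hεex
  set t := ρ + ε with htdef
  have ht : 0 < t := by positivity
  have htT : t ≤ T := by rw [htdef, hTdef]; linarith
  have htρ : ρ ≤ t := by rw [htdef]; linarith
  -- Neumann series for A at t, gives the positive vector x
  have hsumA : ∀ i j, Summable fun k : ℕ => (A ^ k) i j / t ^ (k + 1) := by
    obtain ⟨C, hC, hCb⟩ := hb (ε/2) (by positivity)
    intro i j
    set r := (ρ + ε/2) / t with hr
    have hr0 : 0 ≤ r := by positivity
    have hr1 : r < 1 := by
      rw [hr, div_lt_one ht]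
      linarith
    refine Summable.of_nonneg_of_le
      (fun k => div_nonneg (pow_entry_nonneg hA_nonneg k i j) (by positivity)) (fun k => ?_)
      ((summable_geometric_of_lt_one hr0 hr1).mul_left (C / t))
    have h1 : (A ^ k) i j ≤ C * (ρ + ε/2) ^ k := (le_abs_self _).trans (hCb k i j)
    have h2 : (0:ℝ) < t ^ (k+1) := by positivity
    calc (A ^ k) i j / t ^ (k + 1) ≤ C * (ρ + ε/2) ^ k / t ^ (k+1) := by gcongr
      _ = C / t * r ^ k := by
          rw [hr, div_pow]
          field_simp
          ring
  have hNeuA := neumann A ht hsumA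
  set CmA : Matrix (Fin n) (Fin n) ℝ :=
    Matrix.of fun i j => ∑' k : ℕ, (A ^ k) i j / t ^ (k + 1) with hCmA
  have hCmA0 : ∀ i j, 0 ≤ CmA i j := fun i j =>
    tsum_nonneg fun k => div_nonneg (pow_entry_nonneg hA_nonneg k i j) (by positivity)
  set x : Fin n → ℝ := fun i => ∑ j, CmA i j with hxdef
  have hx : ∀ i, 0 < x i := by
    intro i
    have h1 : (1:ℝ) / t ≤ CmA i i := by
      have := Summable.le_tsum (hsumA i i) 0
        (fun k _ => div_nonneg (pow_entry_nonneg hA_nonneg k i i) (by positivity))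
      simpa [Matrix.one_apply_eq, hCmA] using this
    have h2 : CmA i i ≤ x i :=
      Finset.single_le_sum (f := fun j => CmA i j) (fun j _ => hCmA0 i j) (Finset.mem_univ i)
    have : (0:ℝ) < 1 / t := by positivity
    linarith
  have hACmA : A * CmA = t • CmA - 1 := by
    have h := hNeuA
    rw [Matrix.sub_mul, Matrix.smul_mul, one_mul] at h
    rw [← h]
    abel
  have hAx : ∀ a, ∑ b, A a b * x b ≤ t * x a := by
    intro a
    have h1 : ∑ b, A a b * x b = ∑ j, (A * CmA) a j := (rowsum_mul A CmA a).symm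
    have h2 : ∑ j, (t • CmA - 1) a j = t * x a - 1 := by
      have : ∀ j, (t • CmA - 1) a j = t * CmA a j - (1 : Matrix (Fin n) (Fin n) ℝ) a j := by
        intro j; simp [Matrix.sub_apply, Matrix.smul_apply, smul_eq_mul]
      rw [Finset.sum_congr rfl fun j _ => this j, Finset.sum_sub_distrib, ← Finset.mul_sum]
      simp [Matrix.one_apply, hxdef]
    rw [h1, hACmA, h2]
    linarith
  have hAxT : ∀ a, ∑ b, A a b * x b ≤ T * x a := by
    intro a
    refine (hAx a).trans ?_
    exact mul_le_mul_of_nonneg_right htT (hx a).le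
  have hκ' : ∀ a b, x a ≤ κ * x b := fun a b => hκb x hx hAxT b a
  -- the P and Q matrices
  set Ap := padded A S with hApdef
  have hAp := padded_le (A := A) (S := S) hA_nonneg
  set P : Matrix (Fin n) (Fin n) ℝ := Matrix.of fun a b => Ap a b * x b / (t * x a) with hPdef
  set Q : Matrix (Fin n) (Fin n) ℝ := Matrix.of fun a b => A a b * x b / (t * x a) with hQdef
  have hP0 : ∀ a b, 0 ≤ P a b := by
    intro a b
    rw [hPdef]
    simp only [Matrix.of_apply]
    exact div_nonneg (mul_nonneg (hAp a b).1 (hx b).le) (mul_nonneg ht.le (hx a).le)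
  have hPQ : ∀ a b, P a b ≤ Q a b := by
    intro a b
    rw [hPdef, hQdef]
    simp only [Matrix.of_apply]
    have h2 : 0 < t * x a := mul_pos ht (hx a)
    have h3 := mul_le_mul_of_nonneg_right (hAp a b).2 (hx b).le
    exact (div_le_div_iff_of_pos_right h2).mpr h3
  have hQ0 : ∀ a b, 0 ≤ Q a b := fun a b => (hP0 a b).trans (hPQ a b)
  have hQrow : ∀ a, ∑ b, Q a b ≤ 1 := by
    intro a
    rw [hQdef]
    simp only [Matrix.of_apply]
    rw [← Finset.sum_div]
    rw [div_le_one (mul_pos ht (hx a))]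
    exact (hAx a).trans (le_refl _)
  have hedge : ∀ a b, 0 < A a b → q ≤ Q a b := by
    intro a b hab
    rw [hQdef]
    simp only [Matrix.of_apply]
    rw [le_div_iff₀ (mul_pos ht (hx a))]
    have h1 : pmin ≤ A a b := hpmin_le a b hab
    have h2 : x a ≤ κ * x b := hκ' a b
    have e1 : q * (κ * T) = pmin := by
      rw [hqdef]; field_simp
    nlinarith [hx a, hx b, mul_le_mul_of_nonneg_left h2 hq.le,
      mul_le_mul_of_nonneg_right htT (hx a).le, mul_le_mul_of_nonneg_right h1 (hx b).le]
  have hPzero : ∀ a b, a ∈ S ∨ b ∈ S → P a b = 0 := by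
    intro a b h
    rw [hPdef]
    simp only [Matrix.of_apply]
    have : Ap a b = 0 := by rw [hApdef]; unfold padded; simp [h]
    rw [this, zero_mul, zero_div]
  -- escape estimate
  have hrowN : ∀ i, ∑ j, (P ^ N) i j ≤ θ := by
    intro i
    obtain ⟨N', rfl⟩ : ∃ N', N = N' + 1 := ⟨N - 1, by omega⟩
    have hesc := escape (A := A) (S := S) hP0 hPQ hq hedge hout hPzero N' i (hNreach i)
    have hQ1 := rowsum_pow_le_one hQ0 hQrow (N' + 1) i
    have : ∑ j, (P ^ (N' + 1)) i j ≤ 1 - q ^ (N' + 1) := by linarith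
    exact this.trans (le_max_left _ _)
  have hProw1 : ∀ m i, ∑ j, (P ^ m) i j ≤ 1 := by
    intro m i
    refine le_trans ?_ (rowsum_pow_le_one hQ0 hQrow m i)
    exact Finset.sum_le_sum fun j _ => pow_le_pow_entry hP0 hPQ m i j
  have hdiv := rowsum_pow_div hP0 hθ0 hN1 hrowN hProw1
  -- entry bound for powers of the padded matrix
  have hent : ∀ m a b, (Ap ^ m) a b ≤ κ * t ^ m * θ ^ (m / N) := by
    intro m a b
    have hsp := scaled_pow (B := Ap) hx ht m a b
    have hPle : (P ^ m) a b ≤ θ ^ (m / N) := by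
      refine le_trans ?_ (hdiv m a)
      exact Finset.single_le_sum (f := fun j => (P ^ m) a j)
        (fun j _ => pow_nonneg' hP0 m a j) (Finset.mem_univ b)
    have heq : (Ap ^ m) a b = (P ^ m) a b * (t ^ m * x a) / x b := by
      rw [hsp]
      have hxa := (hx a).ne'
      have hxb := (hx b).ne'
      have htm := (pow_pos ht m).ne'
      field_simp
    rw [heq]
    have h2 : (P ^ m) a b * (t ^ m * x a) ≤ θ ^ (m / N) * (t ^ m * (κ * x b)) := by
      have := hκ' a b
      have hP := pow_nonneg' hP0 m a b
      have htm : (0:ℝ) ≤ t ^ m := by positivity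
      exact mul_le_mul hPle (mul_le_mul_of_nonneg_left this htm)
        (mul_nonneg htm (hx a).le) (pow_nonneg hθ0 _)
    rw [div_le_iff₀ (hx b)]
    calc (P ^ m) a b * (t ^ m * x a) ≤ θ ^ (m / N) * (t ^ m * (κ * x b)) := h2
      _ = κ * t ^ m * θ ^ (m / N) * x b := by ring
  -- summability for the submatrix Neumann series at ρ
  set B := subm A Sᶜ Sᶜ with hBdef
  have hBpow : ∀ k (i j : ↥(Sᶜ : Finset (Fin n))), (B ^ k) i j = (Ap ^ k) i.1 j.1 :=
    fun k i j => subm_pow k i j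
  have hB0 : ∀ k (i j : ↥(Sᶜ : Finset (Fin n))), 0 ≤ (B ^ k) i j := by
    intro k i j
    rw [hBpow]
    exact pow_nonneg' (fun a b => (hAp a b).1) k i.1 j.1
  set γ := ((ρ + ε)/ρ) ^ N * θ with hγdef
  have hθpos : 0 < θ := lt_of_lt_of_le (by norm_num) (le_max_right _ _)
  have hγ0 : 0 < γ := by
    rw [hγdef]
    exact mul_pos (pow_pos (div_pos ht hρpos) N) hθpos
  have htρ1 : 1 ≤ t / ρ := by
    rw [le_div_iff₀ hρpos]
    linarith
  have hsumB : ∀ i j : ↥(Sᶜ : Finset (Fin n)),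
      Summable fun k : ℕ => (B ^ k) i j / ρ ^ (k + 1) := by
    intro i j
    refine Summable.of_nonneg_of_le (fun k => div_nonneg (hB0 k i j) (by positivity)) (fun k => ?_)
      ((summable_geo_div hγ0 hγlt hN1).mul_left (κ / ρ * (t/ρ) ^ N))
    have h1 : (B ^ k) i j ≤ κ * t ^ k * θ ^ (k / N) := by
      rw [hBpow]
      exact hent k i.1 j.1
    have h2 : (0:ℝ) < ρ ^ (k+1) := by positivity
    have key : κ * t ^ k * θ ^ (k / N) / ρ ^ (k + 1)
        ≤ κ / ρ * (t/ρ) ^ N * γ ^ (k / N) := by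
      have e1 : κ * t ^ k * θ ^ (k / N) / ρ ^ (k + 1)
          = κ / ρ * ((t/ρ) ^ k * θ ^ (k / N)) := by
        rw [div_pow]
        field_simp
        ring
      rw [e1]
      have h3 : (t/ρ) ^ k ≤ (t/ρ) ^ (N * (k / N) + N) := by
        apply pow_le_pow_right₀ htρ1
        have h4 := Nat.div_add_mod k N
        have h5 := Nat.mod_lt k (show 0 < N by omega)
        omega
      have h6 : (t/ρ) ^ (N * (k / N) + N) * θ ^ (k / N) = (t/ρ) ^ N * γ ^ (k / N) := by
        rw [hγdef, htdef]
        rw [pow_add, pow_mul, mul_pow]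
        ring
      have h7 : (t/ρ) ^ k * θ ^ (k / N) ≤ (t/ρ) ^ N * γ ^ (k / N) := by
        rw [← h6]
        exact mul_le_mul_of_nonneg_right h3 (by positivity)
      calc κ / ρ * ((t/ρ) ^ k * θ ^ (k / N)) ≤ κ / ρ * ((t/ρ) ^ N * γ ^ (k / N)) := by
            exact mul_le_mul_of_nonneg_left h7 (by positivity)
        _ = κ / ρ * (t/ρ) ^ N * γ ^ (k / N) := by ring
    refine le_trans ?_ key
    gcongr
  have hNeuB := neumann B hρpos hsumB
  set CmB := Matrix.of fun i j : ↥(Sᶜ : Finset (Fin n)) =>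
    ∑' k : ℕ, (B ^ k) i j / ρ ^ (k + 1) with hCmB
  have hCmB0 : ∀ i j, 0 ≤ CmB i j := fun i j =>
    tsum_nonneg fun k => div_nonneg (hB0 k i j) (by positivity)
  constructor
  · rw [Matrix.isUnit_iff_isUnit_det]
    have hdet : (ρ • (1 : Matrix ↥(Sᶜ : Finset (Fin n)) ↥(Sᶜ : Finset (Fin n)) ℝ) - B).det
        * CmB.det = 1 := by
      rw [← Matrix.det_mul, hNeuB, Matrix.det_one]
    exact IsUnit.of_mul_eq_one _ hdet
  · intro i j
    rw [Matrix.inv_eq_right_inv hNeuB]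
    exact hCmB0 i j
end
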